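/- arXiv:1712.01609 — 7 statements merged into one kernel-verified Lean document; each statement's English description precedes it below -/
import Mathlib

section
/- Let (V,E) be a graph, p̄ a probability distribution on V, and Ψ_t a family of stochastic linear maps on the graph that is local and p̄-invariant. Fix ε₀ ∈ (0, 1/4] and T ∈ ℕ with T ≥ 1 such that ‖Ψ_t[p₀] − p̄‖_TV ≤ ε₀ for every probability distribution p₀ on V and every t ≥ T. Then there exist a finite coin set C and a lifted Markov chain over the graph (a local stochastic matrix P on C×V together with a coin assignment v ↦ c_v with initialization F and marginal map f) such that for every ε > 0, every probability distribution p₀ on V, and every t ≥ T·⌈log(1/ε)/log(1/(2ε₀))⌉, one has ‖f(P^t F[p₀]) − p̄‖_TV ≤ ε. -/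
set_option linter.unusedSectionVars false
set_option maxHeartbeats 1000000


open Finset

section Defs

variable {S : Type*} [Fintype S]

/-- `p` is a probability distribution on the finite set `S`. -/
def IsProbDist (p : S → ℝ) : Prop := (∀ s, 0 ≤ p s) ∧ ∑ s, p s = 1

/-- The mass `p(X) = ∑_{s ∈ X} p s` of a subset `X`. -/
noncomputable def mass (p : S → ℝ) (X : Set S) : ℝ := ∑ s, X.indicator p s

/-- Total variation distance `‖p - q‖_TV = (1/2) ∑_s |p s - q s|`. -/
noncomputable def tvDist (p q : S → ℝ) : ℝ := (1/2) * ∑ s, |p s - q s|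

/-- A (column-)stochastic matrix `P s' s`: entries nonnegative, columns sum to one. -/
def IsStochastic (P : S → S → ℝ) : Prop :=
  (∀ s' s, 0 ≤ P s' s) ∧ ∀ s, ∑ s', P s' s = 1

/-- Action of a matrix on a distribution: `(P p)(s') = ∑_s P s' s * p s`. -/
def matVec (P : S → S → ℝ) (p : S → ℝ) : S → ℝ := fun s' => ∑ s, P s' s * p s

open scoped Classical in
/-- Ergodic flow `Q_P(Xᶜ, X) = ∑_{s ∈ X, s' ∉ X} P s' s * pbar s`. -/
noncomputable def ergFlow (P : S → S → ℝ) (pbar : S → ℝ) (X : Set S) : ℝ :=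
  ∑ s, ∑ s', if s ∈ X ∧ s' ∉ X then P s' s * pbar s else 0

/-- Bottleneck ratio `Φ_X(P) = Q_P(Xᶜ,X) / pbar(X)`. -/
noncomputable def bottleneck (P : S → S → ℝ) (pbar : S → ℝ) (X : Set S) : ℝ :=
  ergFlow P pbar X / mass pbar X

/-- The distribution `pbar` conditioned on the set `X`. -/
noncomputable def condDist (pbar : S → ℝ) (X : Set S) : S → ℝ :=
  X.indicator (fun s => pbar s / mass pbar X)

/-- Conductance `Φ(P) = min { Φ_X(P) : 0 < pbar(X) ≤ 1/2 }`. -/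
noncomputable def conductance (P : S → S → ℝ) (pbar : S → ℝ) : ℝ :=
  sInf {r | ∃ X : Set S, 0 < mass pbar X ∧ mass pbar X ≤ 1/2 ∧ r = bottleneck P pbar X}

end Defs

section Graph

variable {V : Type*} [Fintype V]

/-- Neighborhood `B(X) = {v ∉ X : (v,v') ∈ E for some v' ∈ X}`. -/
def nbhd (E : V → V → Prop) (X : Set V) : Set V :=
  {v | v ∉ X ∧ ∃ v' ∈ X, E v v'}

/-- A matrix on `V` is local w.r.t. the graph: `P v' v = 0` whenever `(v,v') ∉ E`. -/
def IsLocalMatrix (E : V → V → Prop) (P : V → V → ℝ) : Prop :=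
  ∀ v' v, ¬ E v v' → P v' v = 0

/-- Graph conductance `Φ_pbar`: supremum of `Φ(P)` over local stochastic `P` fixing `pbar`. -/
noncomputable def graphConductance (E : V → V → Prop) (pbar : V → ℝ) : ℝ :=
  sSup {r | ∃ P : V → V → ℝ, IsStochastic P ∧ IsLocalMatrix E P ∧
    matVec P pbar = pbar ∧ r = conductance P pbar}

/-- A family of stochastic linear maps is local w.r.t. the graph. -/
def IsLocalFamily (E : V → V → Prop) (Ψ : ℕ → (V → ℝ) →ₗ[ℝ] (V → ℝ)) : Prop :=
  ∀ (X : Set V) (p₀ : V → ℝ), IsProbDist p₀ → ∀ t : ℕ,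
    mass (Ψ (t+1) p₀) X ≤ mass (Ψ t p₀) X + mass (Ψ t p₀) (nbhd E X)

end Graph

section Lift

variable {C V : Type*} [Fintype C] [Fintype V]

/-- A stochastic matrix on the lifted space `C × V` is local in the lifted sense. -/
def IsLocalLift (E : V → V → Prop) (P : C × V → C × V → ℝ) : Prop :=
  ∀ c' v' c v, ¬ E v v' → P (c', v') (c, v) = 0

open scoped Classical in
/-- Initialization `F[p](c,v) = p v` if `c = ca v`, else `0`. -/
noncomputable def liftInit (ca : V → C) (p : V → ℝ) : C × V → ℝ :=
  fun x => if x.1 = ca x.2 then p x.2 else 0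

/-- Marginal map `f(p̂)(v) = ∑_c p̂(c,v)`. -/
def margDist (phat : C × V → ℝ) : V → ℝ := fun v => ∑ c, phat (c, v)

/-- Induced chain on `V` of a lifted chain `P` with stationary distribution `phat`. -/
noncomputable def inducedChain (P : C × V → C × V → ℝ) (phat : C × V → ℝ) : V → V → ℝ :=
  fun v' v => ∑ c, ∑ c', (phat (c, v) / margDist phat v) * P (c', v') (c, v)

end Lift





section Strassen
variable {V : Type} [Fintype V] [DecidableEq V]

open scoped Classical in
noncomputable def NBset (R : V → V → Prop) (X : Finset V) : Finset V :=
  univ.filter (fun v => ∃ v' ∈ X, R v' v)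

variable (R : V → V → Prop)

lemma mem_NBset {X : Finset V} {v : V} : v ∈ NBset R X ↔ ∃ v' ∈ X, R v' v := by
  classical
  simp [NBset]

lemma NBset_mono {X Y : Finset V} (h : X ⊆ Y) : NBset R X ⊆ NBset R Y := by
  intro v hv
  rw [mem_NBset] at *
  obtain ⟨v', h1, h2⟩ := hv
  exact ⟨v', h h1, h2⟩

lemma NBset_union (X Y : Finset V) : NBset R (X ∪ Y) = NBset R X ∪ NBset R Y := by
  ext v
  simp only [mem_NBset, mem_union]
  constructor
  · rintro ⟨v', h1 | h1, h2⟩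
    · exact Or.inl ⟨v', h1, h2⟩
    · exact Or.inr ⟨v', h1, h2⟩
  · rintro (⟨v', h1, h2⟩ | ⟨v', h1, h2⟩)
    · exact ⟨v', Or.inl h1, h2⟩
    · exact ⟨v', Or.inr h1, h2⟩

lemma sum_update_eq (f : V → ℝ) (a : V) (c : ℝ) (X : Finset V) :
    ∑ v ∈ X, Function.update f a c v = (∑ v ∈ X, f v) + (if a ∈ X then c - f a else 0) := by
  by_cases h : a ∈ X
  · rw [Finset.sum_update_of_mem h, if_pos h]
    have h2 : ∑ v ∈ X, f v = ∑ v ∈ X \ {a}, f v + f a := by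
      rw [Finset.sum_eq_sum_sdiff_singleton_add h]
    rw [h2]; ring
  · rw [if_neg h, add_zero]
    exact Finset.sum_congr rfl fun v hv =>
      Function.update_of_ne (by rintro rfl; exact h hv) _ _

/-- The coupling conclusion. -/
def IsCouplingOn (R : V → V → Prop) (μ ν : V → ℝ) (π : V → V → ℝ) : Prop :=
  (∀ v' v, 0 ≤ π v' v) ∧ (∀ v' v, ¬ R v' v → π v' v = 0) ∧
  (∀ v, ∑ v', π v' v = μ v) ∧ (∀ v', ∑ v, π v' v = ν v')

open scoped Classical in
noncomputable def suppCard (μ ν : V → ℝ) : ℕ :=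
  (univ.filter (fun v => 0 < μ v)).card + (univ.filter (fun v => 0 < ν v)).card


lemma strassen_split (n : ℕ)
    (IH : ∀ μ ν : V → ℝ, (∀ v, 0 ≤ μ v) → (∀ v, 0 ≤ ν v) → (∑ v, μ v = ∑ v, ν v) →
      (∀ X : Finset V, ∑ v' ∈ X, ν v' ≤ ∑ v ∈ NBset R X, μ v) → suppCard μ ν ≤ n →
      ∃ π, IsCouplingOn R μ ν π)
    (μ ν : V → ℝ) (hμ : ∀ v, 0 ≤ μ v) (hν : ∀ v, 0 ≤ ν v)
    (htot : ∑ v, μ v = ∑ v, ν v)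
    (hall : ∀ X : Finset V, ∑ v' ∈ X, ν v' ≤ ∑ v ∈ NBset R X, μ v)
    (hcard : suppCard μ ν ≤ n + 1)
    (X₀ : Finset V) (h1 : 0 < ∑ v' ∈ X₀, ν v') (h2 : 0 < ∑ v' ∈ univ \ X₀, ν v')
    (ht : ∑ v' ∈ X₀, ν v' = ∑ v ∈ NBset R X₀, μ v) :
    ∃ π, IsCouplingOn R μ ν π := by
  classical
  set N₀ := NBset R X₀ with hN₀
  set μ₁ : V → ℝ := fun v => if v ∈ N₀ then μ v else 0 with hμ₁
  set μ₂ : V → ℝ := fun v => if v ∈ N₀ then 0 else μ v with hμ₂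
  set ν₁ : V → ℝ := fun v => if v ∈ X₀ then ν v else 0 with hν₁
  set ν₂ : V → ℝ := fun v => if v ∈ X₀ then 0 else ν v with hν₂
  have key1 : ∀ (f : V → ℝ) (S X : Finset V),
      ∑ v ∈ X, (if v ∈ S then f v else 0) = ∑ v ∈ X ∩ S, f v := by
    intro f S X
    rw [Finset.sum_ite_mem]
  have key2 : ∀ (f : V → ℝ) (S X : Finset V),
      ∑ v ∈ X, (if v ∈ S then 0 else f v) = ∑ v ∈ X \ S, f v := by
    intro f S X
    have hXS : X \ S = X.filter (fun v => v ∉ S) := by ext v; simp [Finset.mem_sdiff]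
    rw [hXS, Finset.sum_filter]
    exact Finset.sum_congr rfl fun v _ => by by_cases h : v ∈ S <;> simp [h]
  have μ₁def : ∀ v, μ₁ v = if v ∈ N₀ then μ v else 0 := fun v => rfl
  have μ₂def : ∀ v, μ₂ v = if v ∈ N₀ then 0 else μ v := fun v => rfl
  have ν₁def : ∀ v, ν₁ v = if v ∈ X₀ then ν v else 0 := fun v => rfl
  have ν₂def : ∀ v, ν₂ v = if v ∈ X₀ then 0 else ν v := fun v => rfl
  have hμ₁nn : ∀ v, 0 ≤ μ₁ v := by
    intro v; rw [μ₁def]; split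
    · exact hμ v
    · exact le_rfl
  have hμ₂nn : ∀ v, 0 ≤ μ₂ v := by
    intro v; rw [μ₂def]; split
    · exact le_rfl
    · exact hμ v
  have hν₁nn : ∀ v, 0 ≤ ν₁ v := by
    intro v; rw [ν₁def]; split
    · exact hν v
    · exact le_rfl
  have hν₂nn : ∀ v, 0 ≤ ν₂ v := by
    intro v; rw [ν₂def]; split
    · exact le_rfl
    · exact hν v
  have tot₁μ : ∑ v, μ₁ v = ∑ v ∈ N₀, μ v := by
    rw [show (∑ v, μ₁ v) = ∑ v ∈ univ ∩ N₀, μ v from key1 μ N₀ univ, univ_inter]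
  have tot₁ν : ∑ v, ν₁ v = ∑ v ∈ X₀, ν v := by
    rw [show (∑ v, ν₁ v) = ∑ v ∈ univ ∩ X₀, ν v from key1 ν X₀ univ, univ_inter]
  have tot₂μ : ∑ v, μ₂ v = ∑ v ∈ univ \ N₀, μ v := key2 μ N₀ univ
  have tot₂ν : ∑ v, ν₂ v = ∑ v ∈ univ \ X₀, ν v := key2 ν X₀ univ
  have sdμ : ∑ v ∈ univ \ N₀, μ v = ∑ v, μ v - ∑ v ∈ N₀, μ v :=
    Finset.sum_sdiff_eq_sub (subset_univ N₀)
  have sdν : ∑ v ∈ univ \ X₀, ν v = ∑ v, ν v - ∑ v ∈ X₀, ν v :=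
    Finset.sum_sdiff_eq_sub (subset_univ X₀)
  have tot1 : ∑ v, μ₁ v = ∑ v, ν₁ v := by rw [tot₁μ, tot₁ν, ht]
  have tot2 : ∑ v, μ₂ v = ∑ v, ν₂ v := by
    rw [tot₂μ, tot₂ν, sdμ, sdν, htot, ht]
  have hall₁ : ∀ X : Finset V, ∑ v' ∈ X, ν₁ v' ≤ ∑ v ∈ NBset R X, μ₁ v := by
    intro X
    have s1 : ∑ v' ∈ X, ν₁ v' = ∑ v' ∈ X ∩ X₀, ν v' := key1 ν X₀ X
    have s2 : ∑ v' ∈ X ∩ X₀, ν v' ≤ ∑ v ∈ NBset R (X ∩ X₀), μ v := hall _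
    have s3 : ∑ v ∈ NBset R (X ∩ X₀), μ v = ∑ v ∈ NBset R (X ∩ X₀), μ₁ v := by
      refine Finset.sum_congr rfl fun v hv => ?_
      rw [μ₁def, if_pos (NBset_mono R inter_subset_right hv)]
    have s4 : ∑ v ∈ NBset R (X ∩ X₀), μ₁ v ≤ ∑ v ∈ NBset R X, μ₁ v :=
      Finset.sum_le_sum_of_subset_of_nonneg (NBset_mono R inter_subset_left)
        (fun v _ _ => hμ₁nn v)
    linarith
  have hall₂ : ∀ X : Finset V, ∑ v' ∈ X, ν₂ v' ≤ ∑ v ∈ NBset R X, μ₂ v := by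
    intro X
    have s1 : ∑ v' ∈ X, ν₂ v' = ∑ v' ∈ X \ X₀, ν v' := key2 ν X₀ X
    have e1 : ∑ v' ∈ X \ X₀, ν v' + ∑ v' ∈ X₀, ν v' = ∑ v' ∈ X ∪ X₀, ν v' := by
      rw [← Finset.sum_union sdiff_disjoint, sdiff_union_self_eq_union]
    have e2 : ∑ v' ∈ X ∪ X₀, ν v' ≤ ∑ v ∈ NBset R (X ∪ X₀), μ v := hall _
    have e3 : NBset R (X ∪ X₀) = N₀ ∪ (NBset R X \ N₀) := by
      rw [NBset_union, ← hN₀, union_sdiff_self_eq_union]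
      exact union_comm _ _
    have e4 : ∑ v ∈ N₀ ∪ (NBset R X \ N₀), μ v
        = ∑ v ∈ N₀, μ v + ∑ v ∈ NBset R X \ N₀, μ v := Finset.sum_union disjoint_sdiff
    have e5 : ∑ v ∈ NBset R X, μ₂ v = ∑ v ∈ NBset R X \ N₀, μ v := key2 μ N₀ (NBset R X)
    rw [s1, e5]
    rw [e3, e4] at e2
    linarith
  -- support cardinalities
  obtain ⟨b₁, hb₁X, hb₁⟩ : ∃ b₁ ∈ X₀, 0 < ν b₁ := by
    obtain ⟨i, hi, h⟩ := Finset.exists_lt_of_sum_lt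
      (show ∑ v' ∈ X₀, (0:ℝ) < ∑ v' ∈ X₀, ν v' by simpa using h1)
    exact ⟨i, hi, h⟩
  obtain ⟨b₂, hb₂X, hb₂⟩ : ∃ b₂ ∈ univ \ X₀, 0 < ν b₂ := by
    obtain ⟨i, hi, h⟩ := Finset.exists_lt_of_sum_lt
      (show ∑ v' ∈ univ \ X₀, (0:ℝ) < ∑ v' ∈ univ \ X₀, ν v' by simpa using h2)
    exact ⟨i, hi, h⟩
  have hb₂notX₀ : b₂ ∉ X₀ := (Finset.mem_sdiff.1 hb₂X).2
  classical
  have hsubμ₁ : univ.filter (fun v => 0 < μ₁ v) ⊆ univ.filter (fun v => 0 < μ v) := by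
    intro v hv
    simp only [mem_filter] at hv ⊢
    refine ⟨hv.1, ?_⟩
    have h := hv.2
    rw [μ₁def] at h
    by_cases hm : v ∈ N₀
    · rwa [if_pos hm] at h
    · rw [if_neg hm] at h; linarith
  have hsubμ₂ : univ.filter (fun v => 0 < μ₂ v) ⊆ univ.filter (fun v => 0 < μ v) := by
    intro v hv
    simp only [mem_filter] at hv ⊢
    refine ⟨hv.1, ?_⟩
    have h := hv.2
    rw [μ₂def] at h
    by_cases hm : v ∈ N₀
    · rw [if_pos hm] at h; linarith
    · rwa [if_neg hm] at h
  have hssν₁ : univ.filter (fun v => 0 < ν₁ v) ⊂ univ.filter (fun v => 0 < ν v) := by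
    refine Finset.ssubset_iff_of_subset ?_ |>.2 ⟨b₂, ?_, ?_⟩
    · intro v hv
      simp only [mem_filter] at hv ⊢
      refine ⟨hv.1, ?_⟩
      have h := hv.2
      rw [ν₁def] at h
      by_cases hm : v ∈ X₀
      · rwa [if_pos hm] at h
      · rw [if_neg hm] at h; linarith
    · simp [hb₂]
    · simp only [mem_filter, not_and, not_lt]
      intro _
      rw [ν₁def, if_neg hb₂notX₀]
  have hssν₂ : univ.filter (fun v => 0 < ν₂ v) ⊂ univ.filter (fun v => 0 < ν v) := by
    refine Finset.ssubset_iff_of_subset ?_ |>.2 ⟨b₁, ?_, ?_⟩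
    · intro v hv
      simp only [mem_filter] at hv ⊢
      refine ⟨hv.1, ?_⟩
      have h := hv.2
      rw [ν₂def] at h
      by_cases hm : v ∈ X₀
      · rw [if_pos hm] at h; linarith
      · rwa [if_neg hm] at h
    · simp [hb₁]
    · simp only [mem_filter, not_and, not_lt]
      intro _
      rw [ν₂def, if_pos hb₁X]
  have hc1 : suppCard μ₁ ν₁ ≤ n := by
    have A := Finset.card_le_card hsubμ₁
    have B := Finset.card_lt_card hssν₁
    unfold suppCard at hcard ⊢
    omega
  have hc2 : suppCard μ₂ ν₂ ≤ n := by
    have A := Finset.card_le_card hsubμ₂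
    have B := Finset.card_lt_card hssν₂
    unfold suppCard at hcard ⊢
    omega
  obtain ⟨π₁, hπ₁nn, hπ₁supp, hπ₁μ, hπ₁ν⟩ := IH μ₁ ν₁ hμ₁nn hν₁nn tot1 hall₁ hc1
  obtain ⟨π₂, hπ₂nn, hπ₂supp, hπ₂μ, hπ₂ν⟩ := IH μ₂ ν₂ hμ₂nn hν₂nn tot2 hall₂ hc2
  refine ⟨fun v' v => π₁ v' v + π₂ v' v, fun v' v => add_nonneg (hπ₁nn v' v) (hπ₂nn v' v),
    fun v' v h => by
      show π₁ v' v + π₂ v' v = 0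
      rw [hπ₁supp v' v h, hπ₂supp v' v h, add_zero], fun v => ?_, fun v' => ?_⟩
  · show ∑ x : V, (π₁ x v + π₂ x v) = μ v
    rw [Finset.sum_add_distrib, hπ₁μ v, hπ₂μ v, μ₁def, μ₂def]
    by_cases hm : v ∈ N₀ <;> simp [hm]
  · show ∑ x : V, (π₁ v' x + π₂ v' x) = ν v'
    rw [Finset.sum_add_distrib, hπ₁ν v', hπ₂ν v', ν₁def, ν₂def]
    by_cases hm : v' ∈ X₀ <;> simp [hm]


lemma strassen_main (n : ℕ) : ∀ μ ν : V → ℝ, (∀ v, 0 ≤ μ v) → (∀ v, 0 ≤ ν v) →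
    (∑ v, μ v = ∑ v, ν v) →
    (∀ X : Finset V, ∑ v' ∈ X, ν v' ≤ ∑ v ∈ NBset R X, μ v) →
    suppCard μ ν ≤ n →
    ∃ π, IsCouplingOn R μ ν π := by
  classical
  induction n with
  | zero =>
    intro μ ν hμ hν htot hall hcard
    have hν0 : ∀ v, ν v = 0 := by
      intro v
      by_contra h
      have hpos : 0 < ν v := lt_of_le_of_ne (hν v) (Ne.symm h)
      have hmem : v ∈ univ.filter (fun v => 0 < ν v) := by
        simp only [mem_filter]
        exact ⟨mem_univ v, hpos⟩
      have hcp := Finset.card_pos.2 ⟨v, hmem⟩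
      unfold suppCard at hcard
      omega
    have hμ0 : ∀ v, μ v = 0 := by
      have hs : ∑ v, μ v = 0 := by
        rw [htot]
        exact Finset.sum_eq_zero fun v _ => hν0 v
      intro v
      exact (Finset.sum_eq_zero_iff_of_nonneg (fun v _ => hμ v)).1 hs v (mem_univ v)
    exact ⟨fun _ _ => 0, fun _ _ => le_rfl, fun _ _ _ => rfl,
      fun v => by simp [hμ0 v], fun v' => by simp [hν0 v']⟩
  | succ n IH =>
    intro μ ν hμ hν htot hall hcard
    by_cases hb' : ∃ b, 0 < ν b
    case neg =>
      have hν0 : ∀ v, ν v = 0 := fun v => le_antisymm (not_lt.1 fun h => hb' ⟨v, h⟩) (hν v)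
      have hμ0 : ∀ v, μ v = 0 := by
        have hs : ∑ v, μ v = 0 := by
          rw [htot]
          exact Finset.sum_eq_zero fun v _ => hν0 v
        intro v
        exact (Finset.sum_eq_zero_iff_of_nonneg (fun v _ => hμ v)).1 hs v (mem_univ v)
      exact ⟨fun _ _ => 0, fun _ _ => le_rfl, fun _ _ _ => rfl,
        fun v => by simp [hμ0 v], fun v' => by simp [hν0 v']⟩
    case pos =>
    obtain ⟨b, hb⟩ := hb'
    by_cases htight : ∃ X₀ : Finset V, (0 < ∑ v' ∈ X₀, ν v') ∧
        (0 < ∑ v' ∈ univ \ X₀, ν v') ∧ ∑ v' ∈ X₀, ν v' = ∑ v ∈ NBset R X₀, μ v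
    case pos =>
      obtain ⟨X₀, t1, t2, t3⟩ := htight
      exact strassen_split R n IH μ ν hμ hν htot hall hcard X₀ t1 t2 t3
    case neg =>
    push_neg at htight
    have hbb : (0:ℝ) < ∑ v ∈ NBset R {b}, μ v := by
      have h := hall {b}
      rw [Finset.sum_singleton] at h
      linarith
    obtain ⟨a, haN, ha⟩ : ∃ a ∈ NBset R {b}, 0 < μ a := by
      obtain ⟨i, hi, h⟩ := Finset.exists_lt_of_sum_lt
        (show ∑ v ∈ NBset R {b}, (0:ℝ) < ∑ v ∈ NBset R {b}, μ v by simpa using hbb)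
      exact ⟨i, hi, h⟩
    have hRba : R b a := by
      obtain ⟨v', hv', hr⟩ := (mem_NBset R).1 haN
      rw [Finset.mem_singleton] at hv'
      subst hv'
      exact hr
    set slack : Finset V → ℝ := fun X => ∑ v ∈ NBset R X, μ v - ∑ v' ∈ X, ν v' with hslackdef
    set bad : Finset (Finset V) :=
      univ.filter (fun X => b ∉ X ∧ a ∈ NBset R X ∧ 0 < ∑ v' ∈ X, ν v') with hbaddef
    have hbadmem : ∀ X : Finset V, X ∈ bad ↔ b ∉ X ∧ a ∈ NBset R X ∧ 0 < ∑ v' ∈ X, ν v' := by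
      intro X
      rw [hbaddef, mem_filter]
      simp
    have hbadslack : ∀ X ∈ bad, 0 < slack X := by
      intro X hX
      obtain ⟨hbX, haX, hνX⟩ := (hbadmem X).1 hX
      have h2' : 0 < ∑ v' ∈ univ \ X, ν v' := by
        have hbmem : b ∈ univ \ X := Finset.mem_sdiff.2 ⟨mem_univ b, hbX⟩
        have := Finset.single_le_sum (f := ν) (fun i _ => hν i)  hbmem
        linarith
      have hne := htight X hνX h2'
      have hlt : ∑ v' ∈ X, ν v' < ∑ v ∈ NBset R X, μ v := lt_of_le_of_ne (hall X) hne
      simp only [hslackdef]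
      linarith
    set t : ℝ := if hne : bad.Nonempty then min (min (μ a) (ν b)) (bad.inf' hne slack)
      else min (μ a) (ν b) with htdef
    have ht0 : 0 < t := by
      rw [htdef]
      split
      case isTrue hne =>
        refine lt_min (lt_min ha hb) ?_
        rw [Finset.lt_inf'_iff]
        exact hbadslack
      case isFalse => exact lt_min ha hb
    have htμa : t ≤ μ a := by
      rw [htdef]; split
      · exact le_trans (min_le_left _ _) (min_le_left _ _)
      · exact min_le_left _ _
    have htνb : t ≤ ν b := by
      rw [htdef]; split
      · exact le_trans (min_le_left _ _) (min_le_right _ _)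
      · exact min_le_right _ _
    have htbad : ∀ X ∈ bad, t ≤ slack X := by
      intro X hX
      rw [htdef]
      split
      case isTrue hne => exact le_trans (min_le_right _ _) (Finset.inf'_le _ hX)
      case isFalse hne => exact absurd ⟨X, hX⟩ hne
    set μ' := Function.update μ a (μ a - t) with hμ'def
    set ν' := Function.update ν b (ν b - t) with hν'def
    have hμ'nn : ∀ v, 0 ≤ μ' v := by
      intro v
      rw [hμ'def]
      by_cases h : v = a
      · subst h; rw [Function.update_self]; linarith
      · rw [Function.update_of_ne h]; exact hμ v
    have hν'nn : ∀ v, 0 ≤ ν' v := by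
      intro v
      rw [hν'def]
      by_cases h : v = b
      · subst h; rw [Function.update_self]; linarith
      · rw [Function.update_of_ne h]; exact hν v
    have hμ'sum : ∀ X : Finset V, ∑ v ∈ X, μ' v = (∑ v ∈ X, μ v) + (if a ∈ X then - t else 0) := by
      intro X
      rw [hμ'def, sum_update_eq]
      congr 1
      split <;> ring
    have hν'sum : ∀ X : Finset V, ∑ v ∈ X, ν' v = (∑ v ∈ X, ν v) + (if b ∈ X then - t else 0) := by
      intro X
      rw [hν'def, sum_update_eq]
      congr 1
      split <;> ring
    have htot' : ∑ v, μ' v = ∑ v, ν' v := by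
      rw [hμ'sum, hν'sum, if_pos (mem_univ a), if_pos (mem_univ b), htot]
    have hall' : ∀ X : Finset V, ∑ v' ∈ X, ν' v' ≤ ∑ v ∈ NBset R X, μ' v := by
      intro X
      rw [hν'sum, hμ'sum]
      by_cases hbX : b ∈ X
      · have haX : a ∈ NBset R X := (mem_NBset R).2 ⟨b, hbX, hRba⟩
        rw [if_pos hbX, if_pos haX]
        linarith [hall X]
      · rw [if_neg hbX, add_zero]
        by_cases haX : a ∈ NBset R X
        · rw [if_pos haX]
          by_cases hνX : 0 < ∑ v' ∈ X, ν v'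
          · have hXbad : X ∈ bad := (hbadmem X).2 ⟨hbX, haX, hνX⟩
            have h5 := htbad X hXbad
            simp only [hslackdef] at h5
            linarith
          · push_neg at hνX
            have h0 : 0 ≤ ∑ v ∈ NBset R X, μ' v := Finset.sum_nonneg fun v _ => hμ'nn v
            rw [hμ'sum, if_pos haX] at h0
            linarith
        · rw [if_neg haX, add_zero]
          exact hall X
    have hsubμ' : univ.filter (fun v => 0 < μ' v) ⊆ univ.filter (fun v => 0 < μ v) := by
      intro v hv
      simp only [mem_filter] at hv ⊢
      refine ⟨hv.1, ?_⟩
      have h := hv.2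
      rw [hμ'def] at h
      by_cases hva : v = a
      · subst hva; rw [Function.update_self] at h; linarith
      · rwa [Function.update_of_ne hva] at h
    have hsubν' : univ.filter (fun v => 0 < ν' v) ⊆ univ.filter (fun v => 0 < ν v) := by
      intro v hv
      simp only [mem_filter] at hv ⊢
      refine ⟨hv.1, ?_⟩
      have h := hv.2
      rw [hν'def] at h
      by_cases hvb : v = b
      · subst hvb; rw [Function.update_self] at h; linarith
      · rwa [Function.update_of_ne hvb] at h
    have hex : ∃ π', IsCouplingOn R μ' ν' π' := by
      by_cases hc : suppCard μ' ν' ≤ n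
      · exact IH μ' ν' hμ'nn hν'nn htot' hall' hc
      · have hcards : suppCard μ' ν' ≤ n + 1 := by
          have A := Finset.card_le_card hsubμ'
          have B := Finset.card_le_card hsubν'
          unfold suppCard at hcard ⊢
          omega
        have hμ'a : 0 < μ' a := by
          by_contra h
          push_neg at h
          have h0 : ¬ (0 < μ' a) := not_lt.2 h
          have hss : univ.filter (fun v => 0 < μ' v) ⊂ univ.filter (fun v => 0 < μ v) :=
            (Finset.ssubset_iff_of_subset hsubμ').2
              ⟨a, mem_filter.2 ⟨mem_univ a, ha⟩, fun hmem => h0 (mem_filter.1 hmem).2⟩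
          have hlt := Finset.card_lt_card hss
          have B := Finset.card_le_card hsubν'
          unfold suppCard at hc hcard
          omega
        have hν'b : 0 < ν' b := by
          by_contra h
          push_neg at h
          have h0 : ¬ (0 < ν' b) := not_lt.2 h
          have hss : univ.filter (fun v => 0 < ν' v) ⊂ univ.filter (fun v => 0 < ν v) :=
            (Finset.ssubset_iff_of_subset hsubν').2
              ⟨b, mem_filter.2 ⟨mem_univ b, hb⟩, fun hmem => h0 (mem_filter.1 hmem).2⟩
          have hlt := Finset.card_lt_card hss
          have A := Finset.card_le_card hsubμ'
          unfold suppCard at hc hcard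
          omega
        have htltμ : t < μ a := by
          rw [hμ'def, Function.update_self] at hμ'a
          linarith
        have htltν : t < ν b := by
          rw [hν'def, Function.update_self] at hν'b
          linarith
        have htlt : t < min (μ a) (ν b) := lt_min htltμ htltν
        have hbadne : bad.Nonempty := by
          by_contra h
          rw [htdef, dif_neg h] at htlt
          exact lt_irrefl _ htlt
        have htinf : t = bad.inf' hbadne slack := by
          rw [htdef, dif_pos hbadne]
          rcases le_total (min (μ a) (ν b)) (bad.inf' hbadne slack) with h | h
          · exfalso
            rw [htdef, dif_pos hbadne] at htlt
            rw [min_eq_left h] at htlt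
            exact lt_irrefl _ htlt
          · exact min_eq_right h
        obtain ⟨Xs, hXsmem, hXseq⟩ := Finset.exists_mem_eq_inf' hbadne slack
        obtain ⟨hbXs, haXs, hνXs⟩ := (hbadmem Xs).1 hXsmem
        have htXs : t = slack Xs := by rw [htinf, hXseq]
        have h1' : 0 < ∑ v' ∈ Xs, ν' v' := by
          rw [hν'sum, if_neg hbXs, add_zero]
          exact hνXs
        have h2' : 0 < ∑ v' ∈ univ \ Xs, ν' v' := by
          have hbmem : b ∈ univ \ Xs := Finset.mem_sdiff.2 ⟨mem_univ b, hbXs⟩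
          have := Finset.single_le_sum (f := ν') (fun i _ => hν'nn i) hbmem
          linarith
        have ht' : ∑ v' ∈ Xs, ν' v' = ∑ v ∈ NBset R Xs, μ' v := by
          rw [hν'sum, if_neg hbXs, add_zero, hμ'sum, if_pos haXs]
          simp only [hslackdef] at htXs
          linarith
        exact strassen_split R n IH μ' ν' hμ'nn hν'nn htot' hall' hcards Xs h1' h2' ht'
    obtain ⟨π', hπ'nn, hπ'supp, hπ'μ, hπ'ν⟩ := hex
    refine ⟨fun v' v => π' v' v + if v' = b ∧ v = a then t else 0,
      fun v' v => add_nonneg (hπ'nn v' v) (by split <;> [linarith; exact le_rfl]),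
      fun v' v h => by
        show π' v' v + (if v' = b ∧ v = a then t else 0) = 0
        rw [hπ'supp v' v h, zero_add, if_neg]
        rintro ⟨rfl, rfl⟩
        exact h hRba,
      fun v => ?_, fun v' => ?_⟩
    · show ∑ x : V, (π' x v + if x = b ∧ v = a then t else 0) = μ v
      rw [Finset.sum_add_distrib, hπ'μ v]
      by_cases hva : v = a
      · have hsum : ∑ x : V, (if x = b ∧ v = a then t else 0) = t := by
          simp [hva, Finset.sum_ite_eq']
        rw [hsum, hμ'def, hva, Function.update_self]
        ring
      · have hsum : ∑ x : V, (if x = b ∧ v = a then t else 0) = 0 := by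
          simp [hva]
        rw [hsum, hμ'def, Function.update_of_ne hva, add_zero]
    · show ∑ x : V, (π' v' x + if v' = b ∧ x = a then t else 0) = ν v'
      rw [Finset.sum_add_distrib, hπ'ν v']
      by_cases hvb : v' = b
      · have hsum : ∑ x : V, (if v' = b ∧ x = a then t else 0) = t := by
          simp [hvb, Finset.sum_ite_eq']
        rw [hsum, hν'def, hvb, Function.update_self]
        ring
      · have hsum : ∑ x : V, (if v' = b ∧ x = a then t else 0) = 0 := by
          simp [hvb]
        rw [hsum, hν'def, Function.update_of_ne hvb, add_zero]

section Transfer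
variable {V : Type} [Fintype V] [DecidableEq V]

lemma exists_local_transfer (E : V → V → Prop) (hloop : ∀ v, E v v)
    (μ ν : V → ℝ) (hμ : ∀ v, 0 ≤ μ v) (hν : ∀ v, 0 ≤ ν v)
    (htot : ∑ v, μ v = ∑ v, ν v)
    (hall : ∀ X : Finset V, ∑ v' ∈ X, ν v' ≤ ∑ v ∈ NBset (fun v' v => E v v') X, μ v) :
    ∃ M : V → V → ℝ, IsStochastic M ∧ IsLocalMatrix E M ∧ matVec M μ = ν := by
  classical
  obtain ⟨π, hπnn, hπsupp, hπμ, hπν⟩ :=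
    strassen_main (fun v' v => E v v') (suppCard μ ν) μ ν hμ hν htot hall le_rfl
  have hπzero : ∀ v' v, μ v = 0 → π v' v = 0 := by
    intro v' v h0
    have hle : π v' v ≤ ∑ x : V, π x v :=
      Finset.single_le_sum (f := fun x => π x v) (fun i _ => hπnn i v) (mem_univ v')
    rw [hπμ v, h0] at hle
    exact le_antisymm hle (hπnn v' v)
  refine ⟨fun v' v => if 0 < μ v then π v' v / μ v else if v' = v then 1 else 0,
    ⟨fun v' v => ?_, fun v => ?_⟩, fun v' v hE => ?_, ?_⟩
  · dsimp only
    split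
    · exact div_nonneg (hπnn v' v) (le_of_lt (by assumption))
    · split <;> norm_num
  · dsimp only
    by_cases h : 0 < μ v
    · simp only [if_pos h]
      rw [← Finset.sum_div, hπμ v, div_self (ne_of_gt h)]
    · simp only [if_neg h]
      simp [Finset.sum_ite_eq']
  · dsimp only
    by_cases h : 0 < μ v
    · rw [if_pos h, hπsupp v' v hE, zero_div]
    · rw [if_neg h, if_neg]
      intro hvv
      rw [hvv] at hE
      exact hE (hloop v)
  · funext v'
    show ∑ v, (if 0 < μ v then π v' v / μ v else if v' = v then 1 else 0) * μ v = ν v'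
    rw [← hπν v']
    refine Finset.sum_congr rfl fun v _ => ?_
    by_cases h : 0 < μ v
    · rw [if_pos h, div_mul_cancel₀ _ (ne_of_gt h)]
    · have h0 : μ v = 0 := le_antisymm (not_lt.1 h) (hμ v)
      rw [if_neg h, h0, mul_zero, hπzero v' v h0]

end Transfer

section TVlem
variable {V : Type} [Fintype V]

lemma tvDist_self (p : V → ℝ) : tvDist p p = 0 := by simp [tvDist]

lemma tvDist_le_one {p q : V → ℝ} (hp : IsProbDist p) (hq : IsProbDist q) :
    tvDist p q ≤ 1 := by
  unfold tvDist
  have h : ∑ s, |p s - q s| ≤ ∑ s, (p s + q s) :=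
    Finset.sum_le_sum fun s _ => by
      have := abs_sub (p s) (q s)
      calc |p s - q s| ≤ |p s| + |q s| := abs_sub _ _
        _ = p s + q s := by rw [abs_of_nonneg (hp.1 s), abs_of_nonneg (hq.1 s)]
  rw [Finset.sum_add_distrib, hp.2, hq.2] at h
  linarith

lemma tv_decomp {p q : V → ℝ} (hp : IsProbDist p) (hq : IsProbDist q) (hpq : p ≠ q) :
    ∃ (s : ℝ) (f g : V → ℝ), 0 < s ∧ tvDist p q = s ∧ IsProbDist f ∧ IsProbDist g ∧
      (∀ v, p v - q v = s * (f v - g v)) := by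
  classical
  set dp : V → ℝ := fun v => max (p v - q v) 0 with hdp
  set dn : V → ℝ := fun v => max (q v - p v) 0 with hdn
  have hdpnn : ∀ v, 0 ≤ dp v := fun v => le_max_right _ _
  have hdnnn : ∀ v, 0 ≤ dn v := fun v => le_max_right _ _
  have hsub : ∀ v, p v - q v = dp v - dn v := by
    intro v
    show p v - q v = max (p v - q v) 0 - max (q v - p v) 0
    rcases le_total (q v) (p v) with h | h
    · rw [max_eq_left (by linarith), max_eq_right (by linarith)]; ring
    · rw [max_eq_right (by linarith), max_eq_left (by linarith)]; ring
  have habs : ∀ v, |p v - q v| = dp v + dn v := by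
    intro v
    show |p v - q v| = max (p v - q v) 0 + max (q v - p v) 0
    rcases le_total (q v) (p v) with h | h
    · rw [max_eq_left (by linarith), max_eq_right (by linarith), abs_of_nonneg (by linarith)]; ring
    · rw [max_eq_right (by linarith), max_eq_left (by linarith), abs_of_nonpos (by linarith)]; ring
  set s := ∑ v, dp v with hs
  have hsnn : 0 ≤ s := Finset.sum_nonneg fun v _ => hdpnn v
  have hzero : ∑ v, (p v - q v) = 0 := by
    rw [Finset.sum_sub_distrib, hp.2, hq.2]; ring
  have hsn : ∑ v, dn v = s := by
    have h1 : ∑ v, (p v - q v) = ∑ v, dp v - ∑ v, dn v := by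
      rw [← Finset.sum_sub_distrib]
      exact Finset.sum_congr rfl fun v _ => hsub v
    rw [hzero] at h1
    linarith
  have hspos : 0 < s := by
    rcases lt_or_eq_of_le hsnn with h | h
    · exact h
    · exfalso
      apply hpq
      funext v
      have hdp0 : dp v = 0 := by
        have := (Finset.sum_eq_zero_iff_of_nonneg (fun v _ => hdpnn v)).1 h.symm v (mem_univ v)
        exact this
      have hdn0 : dn v = 0 := by
        have h2 : ∑ v, dn v = 0 := by rw [hsn, ← h]
        exact (Finset.sum_eq_zero_iff_of_nonneg (fun v _ => hdnnn v)).1 h2 v (mem_univ v)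
      have := hsub v
      rw [hdp0, hdn0] at this
      linarith
  have htv : tvDist p q = s := by
    unfold tvDist
    rw [Finset.sum_congr rfl fun v _ => habs v, Finset.sum_add_distrib, hsn, ← hs]
    ring
  refine ⟨s, fun v => dp v / s, fun v => dn v / s, hspos, htv,
    ⟨fun v => div_nonneg (hdpnn v) hsnn, by rw [← Finset.sum_div, ← hs, div_self (ne_of_gt hspos)]⟩,
    ⟨fun v => div_nonneg (hdnnn v) hsnn, by rw [← Finset.sum_div, hsn, div_self (ne_of_gt hspos)]⟩,
    fun v => ?_⟩
  rw [hsub v]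
  field_simp

lemma tv_contraction (L : (V → ℝ) →ₗ[ℝ] (V → ℝ)) (hL : ∀ p, IsProbDist p → IsProbDist (L p))
    {p q : V → ℝ} (hp : IsProbDist p) (hq : IsProbDist q) :
    tvDist (L p) (L q) ≤ tvDist p q := by
  by_cases hpq : p = q
  · subst hpq
    rw [tvDist_self, tvDist_self]
  · obtain ⟨s, f, g, hs, htv, hf, hg, hd⟩ := tv_decomp hp hq hpq
    have h0 : p - q = s • f - s • g := by
      funext v
      simp only [Pi.sub_apply, Pi.smul_apply, smul_eq_mul]
      have := hd v; linarith
    have h1 : L p - L q = s • L f - s • L g := by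
      rw [← map_sub, h0, map_sub, map_smul, map_smul]
    have hpt : ∀ v, L p v - L q v = s * (L f v - L g v) := by
      intro v
      have := congrFun h1 v
      simp only [Pi.sub_apply, Pi.smul_apply, smul_eq_mul] at this
      linarith
    have hFp := hL f hf
    have hGp := hL g hg
    have hbound : ∑ v, |L p v - L q v| ≤ 2 * s := by
      calc ∑ v, |L p v - L q v| = ∑ v, s * |L f v - L g v| := by
            refine Finset.sum_congr rfl fun v _ => ?_
            rw [hpt v, abs_mul, abs_of_pos hs]
        _ ≤ ∑ v, s * (L f v + L g v) := by
            refine Finset.sum_le_sum fun v _ => ?_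
            have h2 : |L f v - L g v| ≤ L f v + L g v := by
              calc |L f v - L g v| ≤ |L f v| + |L g v| := abs_sub _ _
                _ = L f v + L g v := by rw [abs_of_nonneg (hFp.1 v), abs_of_nonneg (hGp.1 v)]
            nlinarith [hs.le]
        _ = s * ∑ v, (L f v + L g v) := (Finset.mul_sum _ _ _).symm
        _ = 2 * s := by rw [Finset.sum_add_distrib, hFp.2, hGp.2]; ring
    rw [htv]
    unfold tvDist
    linarith

lemma tv_dobrushin (L : (V → ℝ) →ₗ[ℝ] (V → ℝ)) (hL : ∀ p, IsProbDist p → IsProbDist (L p))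
    {pbar : V → ℝ} (hfix : L pbar = pbar) {ε₀ : ℝ}
    (hmix : ∀ p, IsProbDist p → tvDist (L p) pbar ≤ ε₀)
    {p : V → ℝ} (hp : IsProbDist p) (hpbar : IsProbDist pbar) :
    tvDist (L p) pbar ≤ (2 * ε₀) * tvDist p pbar := by
  by_cases hpq : p = pbar
  · subst hpq
    rw [hfix]
    simp [tvDist_self]
  · obtain ⟨s, f, g, hs, htv, hf, hg, hd⟩ := tv_decomp hp hpbar hpq
    have h0 : p - pbar = s • f - s • g := by
      funext v
      simp only [Pi.sub_apply, Pi.smul_apply, smul_eq_mul]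
      have := hd v; linarith
    have h1 : L p - pbar = s • L f - s • L g := by
      conv_lhs => rw [← hfix]
      rw [← map_sub, h0, map_sub, map_smul, map_smul]
    have hpt : ∀ v, L p v - pbar v = s * (L f v - L g v) := by
      intro v
      have := congrFun h1 v
      simp only [Pi.sub_apply, Pi.smul_apply, smul_eq_mul] at this
      linarith
    have hFp := hL f hf
    have hGp := hL g hg
    have htri : ∀ v, |L f v - L g v| ≤ |L f v - pbar v| + |pbar v - L g v| :=
      fun v => abs_sub_le _ _ _
    have hbound : ∑ v, |L p v - pbar v| ≤ s * (∑ v, |L f v - pbar v| + ∑ v, |L g v - pbar v|) := by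
      calc ∑ v, |L p v - pbar v| = ∑ v, s * |L f v - L g v| := by
            refine Finset.sum_congr rfl fun v _ => ?_
            rw [hpt v, abs_mul, abs_of_pos hs]
        _ ≤ ∑ v, s * (|L f v - pbar v| + |pbar v - L g v|) := by
            refine Finset.sum_le_sum fun v _ => ?_
            nlinarith [htri v, hs.le]
        _ = s * (∑ v, |L f v - pbar v| + ∑ v, |L g v - pbar v|) := by
            rw [← Finset.mul_sum, Finset.sum_add_distrib]
            congr 2
            exact Finset.sum_congr rfl fun v _ => by rw [abs_sub_comm]
    have hmf := hmix f hf
    have hmg := hmix g hg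
    rw [htv]
    unfold tvDist at hmf hmg ⊢
    nlinarith [hs.le, hbound, hmf, hmg]

lemma linmap_apply_dirac [DecidableEq V] (L : (V → ℝ) →ₗ[ℝ] (V → ℝ)) (p : V → ℝ) (v' : V) :
    L p v' = ∑ w, p w * L (Pi.single w 1) v' := by
  classical
  have hp : p = ∑ w, (Pi.single w (p w) : V → ℝ) := by
    funext v
    rw [Finset.sum_apply]
    simp [Pi.single_apply]
  conv_lhs => rw [hp]
  rw [map_sum, Finset.sum_apply]
  refine Finset.sum_congr rfl fun w _ => ?_
  have hsingle : (Pi.single w (p w) : V → ℝ) = p w • (Pi.single w (1:ℝ) : V → ℝ) := by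
    funext v
    simp only [Pi.single_apply, Pi.smul_apply, smul_eq_mul]
    split <;> simp
  rw [hsingle, map_smul]
  simp [smul_eq_mul]

end TVlem

end Strassen

/-- main Theorem 1, generalized: a local, `p̄`-invariant family of
stochastic linear maps with mixing time `T` at level `ε₀ ≤ 1/4` can be simulated by a
lifted Markov chain mixing to `p̄` with mixing time `T⌈log(1/ε)/log(1/(2ε₀))⌉` for all `ε`. -/
theorem lmc_simulates_local_invariant_process
    {V : Type} [Fintype V] (E : V → V → Prop) (hloop : ∀ v, E v v)
    (pbar : V → ℝ) (hpbar : IsProbDist pbar)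
    (Ψ : ℕ → (V → ℝ) →ₗ[ℝ] (V → ℝ))
    (hΨ0 : Ψ 0 = LinearMap.id)
    (hΨstoch : ∀ (t : ℕ) (p : V → ℝ), IsProbDist p → IsProbDist (Ψ t p))
    (hlocal : IsLocalFamily E Ψ)
    (hinv : ∀ t : ℕ, Ψ t pbar = pbar)
    (ε₀ : ℝ) (hε₀pos : 0 < ε₀) (hε₀le : ε₀ ≤ 1/4)
    (T : ℕ) (hT : 1 ≤ T)
    (hmix : ∀ p₀ : V → ℝ, IsProbDist p₀ → ∀ t : ℕ, T ≤ t → tvDist (Ψ t p₀) pbar ≤ ε₀) :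
    ∃ (m : ℕ) (P : Fin m × V → Fin m × V → ℝ) (ca : V → Fin m),
      IsStochastic P ∧ IsLocalLift E P ∧
      ∀ ε : ℝ, 0 < ε → ∀ p₀ : V → ℝ, IsProbDist p₀ → ∀ t : ℕ,
        (T : ℝ) * (⌈Real.log (1/ε) / Real.log (1/(2*ε₀))⌉ : ℝ) ≤ (t : ℝ) →
        tvDist (margDist ((matVec P)^[t] (liftInit ca p₀))) pbar ≤ ε := by
  classical
  have hTpos : 0 < T := hT
  -- Dirac distributions and the per-start evolved distributions
  set δf : V → V → ℝ := fun v₀ => (Pi.single v₀ 1 : V → ℝ) with hδf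
  have hδapp : ∀ v₀ v, δf v₀ v = if v = v₀ then 1 else 0 := by
    intro v₀ v
    show (Pi.single v₀ 1 : V → ℝ) v = _
    rw [Pi.single_apply]
  have hδprob : ∀ v₀, IsProbDist (δf v₀) := by
    intro v₀
    constructor
    · intro v
      rw [hδapp]
      split <;> norm_num
    · rw [Finset.sum_congr rfl fun v _ => hδapp v₀ v]
      simp [Finset.sum_ite_eq']
  set q : V → ℕ → V → ℝ := fun v₀ t => Ψ t (δf v₀) with hqdef
  have hqeq : ∀ v₀ t, q v₀ t = Ψ t (δf v₀) := fun _ _ => rfl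
  have hqprob : ∀ v₀ t, IsProbDist (q v₀ t) := fun v₀ t => hΨstoch t _ (hδprob v₀)
  have hq0 : ∀ w v, q w 0 v = if v = w then 1 else 0 := by
    intro w v
    rw [hqeq, hΨ0]
    exact hδapp w v
  -- mass over finsets
  have hmass : ∀ (p : V → ℝ) (X : Finset V), mass p (↑X : Set V) = ∑ v ∈ X, p v := by
    intro p X
    unfold mass
    simp [Set.indicator_apply, Finset.sum_ite_mem]
  have hmass2 : ∀ (p : V → ℝ) (X : Finset V),
      mass p (nbhd E (↑X : Set V))
        = ∑ v ∈ univ.filter (fun v => v ∈ nbhd E (↑X : Set V)), p v := by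
    intro p X
    unfold mass
    simp [Set.indicator_apply, Finset.sum_filter]
  -- Hall condition from locality
  have hhall : ∀ v₀ t (X : Finset V),
      ∑ v' ∈ X, q v₀ (t+1) v' ≤ ∑ v ∈ NBset (fun v' v => E v v') X, q v₀ t v := by
    intro v₀ t X
    have hl := hlocal (↑X : Set V) (δf v₀) (hδprob v₀) t
    rw [hmass, hmass, hmass2] at hl
    have hsplit : NBset (fun v' v => E v v') X
        = X ∪ univ.filter (fun v => v ∈ nbhd E (↑X : Set V)) := by
      ext v
      rw [mem_NBset, Finset.mem_union, Finset.mem_filter]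
      constructor
      · rintro ⟨v', hv', hE⟩
        by_cases hvX : v ∈ X
        · exact Or.inl hvX
        · refine Or.inr ⟨mem_univ v, ?_⟩
          show v ∉ (↑X : Set V) ∧ ∃ w ∈ (↑X : Set V), E v w
          exact ⟨by simpa using hvX, v', by simpa using hv', hE⟩
      · rintro (hvX | ⟨-, hvn⟩)
        · exact ⟨v, hvX, hloop v⟩
        · obtain ⟨hv1, v', hv', hE⟩ := hvn
          exact ⟨v', by simpa using hv', hE⟩
    have hdisj : Disjoint X (univ.filter (fun v => v ∈ nbhd E (↑X : Set V))) := by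
      rw [Finset.disjoint_left]
      intro v hv hv2
      rw [Finset.mem_filter] at hv2
      exact hv2.2.1 (by simpa using hv)
    rw [← hqeq, ← hqeq] at hl
    rw [hsplit, Finset.sum_union hdisj]
    exact hl
  -- local transfer matrices realizing one step of Ψ on each dirac trajectory
  have hMex : ∀ v₀ t, ∃ Mm : V → V → ℝ, IsStochastic Mm ∧ IsLocalMatrix E Mm ∧
      matVec Mm (q v₀ t) = q v₀ (t+1) := by
    intro v₀ t
    exact exists_local_transfer E hloop (q v₀ t) (q v₀ (t+1)) (hqprob v₀ t).1
      (hqprob v₀ (t+1)).1 (by rw [(hqprob v₀ t).2, (hqprob v₀ (t+1)).2]) (hhall v₀ t)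
  choose M hMstoch hMloc hMtrans using hMex
  -- the lifted chain on (V × Fin T) × V
  set fin0 : Fin T := ⟨0, hTpos⟩ with hfin0
  set P0 : (V × Fin T) × V → (V × Fin T) × V → ℝ := fun x y =>
    if y.1.2.val + 1 < T then
      (if x.1.1 = y.1.1 ∧ x.1.2.val = y.1.2.val + 1 then M y.1.1 y.1.2.val x.2 y.2 else 0)
    else
      (if x.1.1 = x.2 ∧ x.1.2.val = 0 then M y.1.1 y.1.2.val x.2 y.2 else 0)
    with hP0
  have hP0app : ∀ x y, P0 x y =
    if y.1.2.val + 1 < T then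
      (if x.1.1 = y.1.1 ∧ x.1.2.val = y.1.2.val + 1 then M y.1.1 y.1.2.val x.2 y.2 else 0)
    else
      (if x.1.1 = x.2 ∧ x.1.2.val = 0 then M y.1.1 y.1.2.val x.2 y.2 else 0) := fun _ _ => rfl
  have hP0nn : ∀ x y, 0 ≤ P0 x y := by
    intro x y
    rw [hP0app]
    split <;> split
    · exact (hMstoch _ _).1 _ _
    · exact le_rfl
    · exact (hMstoch _ _).1 _ _
    · exact le_rfl
  have hfinsum : ∀ (k : ℕ) (hk : k < T) (f : Fin T → ℝ),
      ∑ σ' : Fin T, (if σ'.val = k then f σ' else 0) = f ⟨k, hk⟩ := by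
    intro k hk f
    have he : ∀ σ' : Fin T, (σ'.val = k) = (σ' = ⟨k, hk⟩) := by
      intro σ'
      apply propext
      exact ⟨fun h => Fin.ext h, fun h => by rw [h]⟩
    simp only [he]
    simp [Finset.sum_ite_eq']
  have hP0col : ∀ y, ∑ x, P0 x y = 1 := by
    intro y
    obtain ⟨⟨v₀, σ⟩, v⟩ := y
    rw [Fintype.sum_prod_type_right]
    by_cases h : σ.val + 1 < T
    · have hstep : ∀ v' : V, ∑ c : V × Fin T, P0 (c, v') ((v₀, σ), v)
          = M v₀ σ.val v' v := by
        intro v'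
        rw [Fintype.sum_prod_type]
        have h1 : ∀ w₀ : V, ∑ σ' : Fin T, P0 ((w₀, σ'), v') ((v₀, σ), v)
            = if w₀ = v₀ then M v₀ σ.val v' v else 0 := by
          intro w₀
          by_cases hw : w₀ = v₀
          · rw [if_pos hw]
            have : ∀ σ' : Fin T, P0 ((w₀, σ'), v') ((v₀, σ), v)
                = if σ'.val = σ.val + 1 then M v₀ σ.val v' v else 0 := by
              intro σ'
              rw [hP0app]
              simp only [if_pos h]
              by_cases hσ : σ'.val = σ.val + 1 <;> simp [hw, hσ]
            rw [Finset.sum_congr rfl fun σ' _ => this σ', hfinsum _ h]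
          · rw [if_neg hw]
            refine Finset.sum_eq_zero fun σ' _ => ?_
            rw [hP0app]
            simp only [if_pos h]
            rw [if_neg]
            rintro ⟨h1, -⟩
            exact hw h1
        rw [Finset.sum_congr rfl fun w₀ _ => h1 w₀]
        simp [Finset.sum_ite_eq']
      rw [Finset.sum_congr rfl fun v' _ => hstep v']
      exact (hMstoch v₀ σ.val).2 v
    · have hstep : ∀ v' : V, ∑ c : V × Fin T, P0 (c, v') ((v₀, σ), v)
          = M v₀ σ.val v' v := by
        intro v'
        rw [Fintype.sum_prod_type]
        have h1 : ∀ w₀ : V, ∑ σ' : Fin T, P0 ((w₀, σ'), v') ((v₀, σ), v)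
            = if w₀ = v' then M v₀ σ.val v' v else 0 := by
          intro w₀
          by_cases hw : w₀ = v'
          · rw [if_pos hw]
            have : ∀ σ' : Fin T, P0 ((w₀, σ'), v') ((v₀, σ), v)
                = if σ'.val = 0 then M v₀ σ.val v' v else 0 := by
              intro σ'
              rw [hP0app]
              simp only [if_neg h]
              by_cases hσ : σ'.val = 0 <;> simp [hw, hσ]
            rw [Finset.sum_congr rfl fun σ' _ => this σ', hfinsum _ hTpos]
          · rw [if_neg hw]
            refine Finset.sum_eq_zero fun σ' _ => ?_
            rw [hP0app]
            simp only [if_neg h]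
            rw [if_neg]
            rintro ⟨h1, -⟩
            exact hw h1
        rw [Finset.sum_congr rfl fun w₀ _ => h1 w₀]
        simp [Finset.sum_ite_eq']
      rw [Finset.sum_congr rfl fun v' _ => hstep v']
      exact (hMstoch v₀ σ.val).2 v
  have hP0loc : ∀ x y, ¬ E y.2 x.2 → P0 x y = 0 := by
    intro x y hE
    rw [hP0app]
    have hM0 : M y.1.1 y.1.2.val x.2 y.2 = 0 := hMloc _ _ _ _ hE
    split <;> split <;> simp [hM0]
  -- transport to Fin m
  set m : ℕ := Fintype.card (V × Fin T) with hm
  set eqv : Fin m ≃ V × Fin T := (Fintype.equivFin (V × Fin T)).symm with heqv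
  set em : Fin m × V ≃ (V × Fin T) × V := Equiv.prodCongr eqv (Equiv.refl V) with hem
  have hemapp : ∀ x : Fin m × V, em x = (eqv x.1, x.2) := fun x => rfl
  have hemsymm : ∀ y : (V × Fin T) × V, em.symm y = (eqv.symm y.1, y.2) := fun y => rfl
  set P' : Fin m × V → Fin m × V → ℝ := fun x y => P0 (em x) (em y) with hP'
  set ca : V → Fin m := fun v => eqv.symm (v, fin0) with hca
  refine ⟨m, P', ca, ⟨fun x y => hP0nn _ _, fun y => ?_⟩, fun c' v' c v hE => hP0loc _ _ hE, ?_⟩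
  · calc ∑ x, P' x y = ∑ x : Fin m × V, P0 (em x) (em y) := rfl
      _ = ∑ x', P0 x' (em y) := Equiv.sum_comp em (fun x' => P0 x' (em y))
      _ = 1 := hP0col _
  intro ε hε p₀ hp₀ t hineq
  -- initial lifted distribution and the renewal sequence
  set pinit : (V × Fin T) × V → ℝ := fun x => if x.1 = (x.2, fin0) then p₀ x.2 else 0 with hpinit
  have hpinitapp : ∀ x, pinit x = if x.1 = (x.2, fin0) then p₀ x.2 else 0 := fun _ => rfl
  set r : ℕ → V → ℝ := fun k => (fun p => Ψ T p)^[k] p₀ with hr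
  have hr0 : r 0 = p₀ := rfl
  have hrsucc : ∀ k, r (k+1) = Ψ T (r k) := by
    intro k
    show (fun p => Ψ T p)^[k+1] p₀ = _
    rw [Function.iterate_succ_apply']
  have hrprob : ∀ k, IsProbDist (r k) := by
    intro k
    induction k with
    | zero => exact hp₀
    | succ k ih => rw [hrsucc]; exact hΨstoch T _ ih
  -- the invariant formula for the evolution of the lifted chain
  have hform : ∀ s : ℕ, (matVec P0)^[s] pinit =
      fun x : (V × Fin T) × V =>
        if x.1.2.val = s % T then r (s / T) x.1.1 * q x.1.1 (s % T) x.2 else 0 := by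
    intro s
    induction s with
    | zero =>
      rw [Function.iterate_zero_apply]
      funext x
      obtain ⟨⟨w₀, σ⟩, v⟩ := x
      rw [hpinitapp]
      simp only [Nat.zero_mod, Nat.zero_div]
      rw [hr0]
      by_cases h1 : σ.val = 0
      · have hσ : σ = fin0 := Fin.ext h1
        by_cases h2 : w₀ = v
        · simp only [if_pos h1]
          rw [if_pos (by rw [hσ, h2]), hq0]
          rw [if_pos h2.symm, h2]
          ring
        · simp only [if_pos h1]
          rw [if_neg (by rw [hσ]; intro hcon; exact h2 (congrArg Prod.fst hcon)), hq0]
          rw [if_neg (fun hc => h2 hc.symm)]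
          ring
      · rw [if_neg h1, if_neg]
        intro hcon
        apply h1
        have : σ = fin0 := congrArg Prod.snd hcon
        rw [this]
    | succ s ih =>
      rw [Function.iterate_succ_apply', ih]
      funext x
      obtain ⟨⟨w₀, σ'⟩, v'⟩ := x
      have hτ : s % T < T := Nat.mod_lt _ hTpos
      set τ : ℕ := s % T with hτdef
      set k : ℕ := s / T with hkdef
      have hsdm : T * k + τ = s := Nat.div_add_mod s T
      show ∑ y : (V × Fin T) × V, P0 ((w₀, σ'), v') y *
          (if y.1.2.val = τ then r k y.1.1 * q y.1.1 τ y.2 else 0) = _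
      rw [Fintype.sum_prod_type]
      have hcollapse : ∀ c : V × Fin T, ∑ v : V, P0 ((w₀, σ'), v') ((c.1, c.2), v) *
          (if c.2.val = τ then r k c.1 * q c.1 τ v else 0)
          = if c.2.val = τ then
              ∑ v : V, P0 ((w₀, σ'), v') ((c.1, c.2), v) * (r k c.1 * q c.1 τ v) else 0 := by
        intro c
        by_cases hc : c.2.val = τ
        · rw [if_pos hc]
          exact Finset.sum_congr rfl fun v _ => by rw [if_pos hc]
        · rw [if_neg hc]
          exact Finset.sum_eq_zero fun v _ => by rw [if_neg hc, mul_zero]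
      rw [Finset.sum_congr rfl fun c _ => hcollapse c]
      rw [Fintype.sum_prod_type]
      rw [Finset.sum_congr rfl fun v₀ _ => hfinsum τ hτ
        (fun σ => ∑ v : V, P0 ((w₀, σ'), v') ((v₀, σ), v) * (r k v₀ * q v₀ τ v))]
      by_cases hA : τ + 1 < T
      · have hP0val : ∀ v₀ v, P0 ((w₀, σ'), v') ((v₀, ⟨τ, hτ⟩), v)
            = if w₀ = v₀ ∧ σ'.val = τ + 1 then M v₀ τ v' v else 0 := by
          intro v₀ v
          rw [hP0app]
          simp only [if_pos hA]
        have hinner : ∀ v₀ : V, ∑ v : V, P0 ((w₀, σ'), v') ((v₀, ⟨τ, hτ⟩), v) * (r k v₀ * q v₀ τ v)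
            = if w₀ = v₀ ∧ σ'.val = τ + 1 then r k v₀ * q v₀ (τ+1) v' else 0 := by
          intro v₀
          by_cases hc : w₀ = v₀ ∧ σ'.val = τ + 1
          · rw [if_pos hc]
            have hMv : ∑ v, M v₀ τ v' v * q v₀ τ v = q v₀ (τ+1) v' := congrFun (hMtrans v₀ τ) v'
            calc ∑ v : V, P0 ((w₀, σ'), v') ((v₀, ⟨τ, hτ⟩), v) * (r k v₀ * q v₀ τ v)
                = ∑ v : V, r k v₀ * (M v₀ τ v' v * q v₀ τ v) := by
                  refine Finset.sum_congr rfl fun v _ => ?_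
                  rw [hP0val, if_pos hc]
                  ring
              _ = r k v₀ * ∑ v, M v₀ τ v' v * q v₀ τ v := by rw [← Finset.mul_sum]
              _ = r k v₀ * q v₀ (τ+1) v' := by rw [hMv]
          · rw [if_neg hc]
            refine Finset.sum_eq_zero fun v _ => ?_
            rw [hP0val, if_neg hc, zero_mul]
        rw [Finset.sum_congr rfl fun v₀ _ => hinner v₀]
        have hm1 : (s+1) % T = τ + 1 := by
          have e : s + 1 = (τ + 1) + k * T := by
            conv_lhs => rw [← hsdm]
            ring
          rw [e, Nat.add_mul_mod_self_right, Nat.mod_eq_of_lt hA]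
        have hd1 : (s+1) / T = k := by
          have e : s + 1 = (τ + 1) + k * T := by
            conv_lhs => rw [← hsdm]
            ring
          rw [e, Nat.add_mul_div_right _ _ hTpos, Nat.div_eq_of_lt hA, zero_add]
        rw [hm1, hd1]
        have hsplitand : ∀ v₀ : V, (if w₀ = v₀ ∧ σ'.val = τ + 1 then r k v₀ * q v₀ (τ+1) v' else 0)
            = if w₀ = v₀ then (if σ'.val = τ + 1 then r k v₀ * q v₀ (τ+1) v' else 0) else 0 := by
          intro v₀
          by_cases h1 : w₀ = v₀ <;> by_cases h2 : σ'.val = τ + 1 <;> simp [h1, h2]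
        rw [Finset.sum_congr rfl fun v₀ _ => hsplitand v₀]
        simp [Finset.sum_ite_eq]
      · have hτT : τ + 1 = T := by omega
        have hP0val : ∀ v₀ v, P0 ((w₀, σ'), v') ((v₀, ⟨τ, hτ⟩), v)
            = if w₀ = v' ∧ σ'.val = 0 then M v₀ τ v' v else 0 := by
          intro v₀ v
          rw [hP0app]
          simp only [if_neg hA]
        have hinner : ∀ v₀ : V, ∑ v : V, P0 ((w₀, σ'), v') ((v₀, ⟨τ, hτ⟩), v) * (r k v₀ * q v₀ τ v)
            = if w₀ = v' ∧ σ'.val = 0 then r k v₀ * q v₀ (τ+1) v' else 0 := by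
          intro v₀
          by_cases hc : w₀ = v' ∧ σ'.val = 0
          · rw [if_pos hc]
            have hMv : ∑ v, M v₀ τ v' v * q v₀ τ v = q v₀ (τ+1) v' := congrFun (hMtrans v₀ τ) v'
            calc ∑ v : V, P0 ((w₀, σ'), v') ((v₀, ⟨τ, hτ⟩), v) * (r k v₀ * q v₀ τ v)
                = ∑ v : V, r k v₀ * (M v₀ τ v' v * q v₀ τ v) := by
                  refine Finset.sum_congr rfl fun v _ => ?_
                  rw [hP0val, if_pos hc]
                  ring
              _ = r k v₀ * ∑ v, M v₀ τ v' v * q v₀ τ v := by rw [← Finset.mul_sum]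
              _ = r k v₀ * q v₀ (τ+1) v' := by rw [hMv]
          · rw [if_neg hc]
            refine Finset.sum_eq_zero fun v _ => ?_
            rw [hP0val, if_neg hc, zero_mul]
        rw [Finset.sum_congr rfl fun v₀ _ => hinner v₀]
        have hsum2 : ∑ v₀ : V, (if w₀ = v' ∧ σ'.val = 0 then r k v₀ * q v₀ (τ+1) v' else 0)
            = if w₀ = v' ∧ σ'.val = 0 then ∑ v₀ : V, r k v₀ * q v₀ (τ+1) v' else 0 := by
          by_cases hc : w₀ = v' ∧ σ'.val = 0
          · rw [if_pos hc]
            exact Finset.sum_congr rfl fun v₀ _ => by rw [if_pos hc]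
          · rw [if_neg hc]
            exact Finset.sum_eq_zero fun v₀ _ => by rw [if_neg hc]
        rw [hsum2]
        have hΨT : ∑ v₀ : V, r k v₀ * q v₀ (τ+1) v' = r (k+1) v' := by
          rw [hrsucc k, ← hτT]
          exact (linmap_apply_dirac (Ψ (τ+1)) (r k) v').symm
        have hm1 : (s+1) % T = 0 := by
          have e : s + 1 = (k+1) * T := by
            conv_lhs => rw [← hsdm]
            calc T * k + τ + 1 = T * k + (τ + 1) := by ring
              _ = T * k + T := by rw [hτT]
              _ = (k+1) * T := by ring
          rw [e, Nat.mul_mod_left]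
        have hd1 : (s+1) / T = k + 1 := by
          have e : s + 1 = (k+1) * T := by
            conv_lhs => rw [← hsdm]
            calc T * k + τ + 1 = T * k + (τ + 1) := by ring
              _ = T * k + T := by rw [hτT]
              _ = (k+1) * T := by ring
          rw [e, Nat.mul_div_cancel _ hTpos]
        rw [hΨT, hm1, hd1]
        by_cases h1 : σ'.val = 0 <;> by_cases h2 : w₀ = v' <;>
          simp [h1, h2, hq0, Ne.symm, eq_comm]
  -- marginal of the lifted evolution
  have hmarg : ∀ s : ℕ, margDist ((matVec P0)^[s] pinit) = Ψ (s % T) (r (s / T)) := by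
    intro s
    funext v
    rw [hform s]
    show ∑ c : V × Fin T, (if c.2.val = s % T then r (s / T) c.1 * q c.1 (s % T) v else 0) = _
    rw [Fintype.sum_prod_type]
    rw [Finset.sum_congr rfl fun v₀ _ => hfinsum (s % T) (Nat.mod_lt _ hTpos)
      (fun σ => r (s / T) v₀ * q v₀ (s % T) v)]
    exact (linmap_apply_dirac (Ψ (s % T)) (r (s / T)) v).symm
  -- transport: the Fin m chain marginal equals the P0 chain marginal
  set Φ : (Fin m × V → ℝ) → ((V × Fin T) × V → ℝ) := fun p y => p (em.symm y) with hΦ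
  have hΦmat : ∀ p, Φ (matVec P' p) = matVec P0 (Φ p) := by
    intro p
    funext y
    show matVec P' p (em.symm y) = _
    show ∑ z : Fin m × V, P' (em.symm y) z * p z = _
    have h1 : ∀ z, P' (em.symm y) z * p z = P0 y (em z) * Φ p (em z) := by
      intro z
      rw [hP']
      show P0 (em (em.symm y)) (em z) * p z = P0 y (em z) * p (em.symm (em z))
      rw [Equiv.apply_symm_apply, Equiv.symm_apply_apply]
    rw [Finset.sum_congr rfl fun z _ => h1 z]
    exact Equiv.sum_comp em (fun z' => P0 y z' * Φ p z')
  have hΦiter : ∀ (n : ℕ) (p : Fin m × V → ℝ),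
      Φ ((matVec P')^[n] p) = (matVec P0)^[n] (Φ p) := by
    intro n
    induction n with
    | zero => intro p; rfl
    | succ n ih =>
      intro p
      rw [Function.iterate_succ_apply', Function.iterate_succ_apply', ← ih, hΦmat]
  have hΦinit : Φ (liftInit ca p₀) = pinit := by
    funext y
    obtain ⟨c', v⟩ := y
    rw [hpinitapp]
    show liftInit ca p₀ (em.symm (c', v)) = _
    rw [hemsymm, hca]
    simp [liftInit, EmbeddingLike.apply_eq_iff_eq]
  have hmargeq : margDist ((matVec P')^[t] (liftInit ca p₀)) = Ψ (t % T) (r (t / T)) := by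
    have h1 : (matVec P0)^[t] pinit = Φ ((matVec P')^[t] (liftInit ca p₀)) := by
      rw [hΦiter, hΦinit]
    rw [← hmarg t, h1]
    funext v
    show ∑ c : Fin m, ((matVec P')^[t] (liftInit ca p₀)) (c, v)
      = ∑ c' : V × Fin T, ((matVec P')^[t] (liftInit ca p₀)) (em.symm (c', v))
    have h2 : ∀ c' : V × Fin T, ((matVec P')^[t] (liftInit ca p₀)) (em.symm (c', v))
        = ((matVec P')^[t] (liftInit ca p₀)) (eqv.symm c', v) := fun c' => by rw [hemsymm]
    rw [Finset.sum_congr rfl fun c' _ => h2 c']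
    exact (Equiv.sum_comp eqv.symm (fun c => ((matVec P')^[t] (liftInit ca p₀)) (c, v))).symm
  rw [hmargeq]
  -- contraction estimates
  have h2ε₀nn : (0:ℝ) ≤ 2 * ε₀ := by linarith
  have hcontr : ∀ kk : ℕ, tvDist (r kk) pbar ≤ (2*ε₀)^kk := by
    intro kk
    induction kk with
    | zero =>
      rw [pow_zero]
      exact tvDist_le_one (hrprob 0) hpbar
    | succ kk ih =>
      rw [hrsucc kk, pow_succ]
      calc tvDist (Ψ T (r kk)) pbar ≤ (2*ε₀) * tvDist (r kk) pbar :=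
            tv_dobrushin (Ψ T) (hΨstoch T) (hinv T)
              (fun p hp => hmix p hp T le_rfl) (hrprob kk) hpbar
        _ ≤ (2*ε₀) * (2*ε₀)^kk := by
            exact mul_le_mul_of_nonneg_left ih h2ε₀nn
        _ = (2*ε₀)^kk * (2*ε₀) := by ring
  have hfinal : tvDist (Ψ (t % T) (r (t / T))) pbar ≤ (2*ε₀)^(t / T) := by
    calc tvDist (Ψ (t % T) (r (t / T))) pbar
        = tvDist (Ψ (t % T) (r (t / T))) (Ψ (t % T) pbar) := by rw [hinv]
      _ ≤ tvDist (r (t / T)) pbar := tv_contraction (Ψ (t % T)) (hΨstoch (t % T))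
          (hrprob (t / T)) hpbar
      _ ≤ (2*ε₀)^(t / T) := hcontr (t / T)
  -- final numeric bound
  by_cases hε1 : 1 ≤ ε
  · exact le_trans (tvDist_le_one (hΨstoch _ _ (hrprob _)) hpbar) hε1
  · push_neg at hε1
    set K : ℤ := ⌈Real.log (1/ε) / Real.log (1/(2*ε₀))⌉ with hK
    have h2ε₀lt : 2 * ε₀ < 1 := by linarith
    have h2ε₀pos : 0 < 2 * ε₀ := by linarith
    have hlogpos : 0 < Real.log (1/(2*ε₀)) := by
      apply Real.log_pos
      rw [lt_div_iff₀ h2ε₀pos]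
      linarith
    -- t / T ≥ K
    have hkK : (K : ℝ) ≤ ((t / T : ℕ) : ℝ) := by
      have hmod : t % T < T := Nat.mod_lt _ hTpos
      have hdm : T * (t / T) + t % T = t := Nat.div_add_mod t T
      have h2n : t < T * (t / T) + T := by
        calc t = T * (t / T) + t % T := hdm.symm
          _ < T * (t / T) + T := Nat.add_lt_add_left hmod _
      have h2 : (t : ℝ) < (T : ℝ) * ((t / T : ℕ) : ℝ) + (T : ℝ) := by exact_mod_cast h2n
      have hTR : (0 : ℝ) < (T : ℝ) := by exact_mod_cast hTpos
      have h4 : (T : ℝ) * (K : ℝ) < (T : ℝ) * (((t / T : ℕ) : ℝ) + 1) := by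
        have h5 := lt_of_le_of_lt hineq h2
        ring_nf
        ring_nf at h5
        linarith
      have h3 : (K : ℝ) < ((t / T : ℕ) : ℝ) + 1 := lt_of_mul_lt_mul_left h4 (le_of_lt hTR)
      have hKz : K ≤ ((t / T : ℕ) : ℤ) := by
        by_contra hcon
        push_neg at hcon
        have h8 : ((t / T : ℕ) : ℤ) + 1 ≤ K := hcon
        have h9 := (Int.cast_le (R := ℝ)).2 h8
        rw [Int.cast_add, Int.cast_one, Int.cast_natCast] at h9
        linarith
      have h10 := (Int.cast_le (R := ℝ)).2 hKz
      rw [Int.cast_natCast] at h10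
      exact h10
    have hKge : Real.log (1/ε) / Real.log (1/(2*ε₀)) ≤ ((t / T : ℕ) : ℝ) :=
      le_trans (Int.le_ceil _) hkK
    have hmain : Real.log (1/ε) ≤ ((t / T : ℕ) : ℝ) * Real.log (1/(2*ε₀)) :=
      (div_le_iff₀ hlogpos).1 hKge
    have hpow : (2*ε₀)^(t / T) ≤ ε := by
      have hlog1 : Real.log (1/ε) = - Real.log ε := by rw [one_div, Real.log_inv]
      have hlog2 : Real.log (1/(2*ε₀)) = - Real.log (2*ε₀) := by rw [one_div, Real.log_inv]
      have h3 : Real.log ((2*ε₀)^(t/T)) ≤ Real.log ε := by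
        rw [Real.log_pow]
        rw [hlog1, hlog2] at hmain
        nlinarith [hmain]

      have h4 : (0:ℝ) < (2*ε₀)^(t/T) := pow_pos h2ε₀pos _
      exact (Real.log_le_log_iff h4 hε).1 h3
    exact le_trans hfinal hpow
end

section
/- Let (V,E) be a graph and Ψ_t a local family of stochastic linear maps on the graph. Then for every T ∈ ℕ there exist a finite coin set C of cardinality |V|·(T+1), a stochastic matrix P on C×V that is local in the lifted sense, and a coin assignment v ↦ c_v with initialization F and marginal map f, such that f(P^t F[p]) = Ψ_t[p] for every probability distribution p on V and every t with 0 ≤ t ≤ T. -/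
open Finset

/-! Locality of `Ψ` says that `Ψ (t + 1) δᵤ` puts no more mass on any set `X` than `Ψ t δᵤ`
puts on the closed neighbourhood of `X`. This Hall-type condition makes `Ψ (t + 1) δᵤ` the image
of `Ψ t δᵤ` under some local stochastic matrix `M u t`: otherwise a linear functional `φ` would
separate it from the convex hull of the images under deterministic local moves, but the move
sending every vertex to its `φ`-best neighbour wins against `Ψ (t + 1) δᵤ` by a layer-cake
comparison of superlevel sets. The lifted chain keeps the starting vertex `u` and a clock `t` in
its coin and applies `M u t`; after `t ≤ T` steps its marginal is `∑ u, p u • Ψ t δᵤ = Ψ t p`. -/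

section Dominance

open MeasureTheory Set

variable {S : Type*} [Fintype S]

lemma integrableOn_Ici_indicator_Iio_const (a b c : ℝ) :
    IntegrableOn ((Iio a).indicator fun _ => b) (Ici c) := by
  rw [IntegrableOn, integrable_indicator_iff measurableSet_Iio, IntegrableOn,
    Measure.restrict_restrict measurableSet_Iio]
  exact integrableOn_const (by simp [Iio_inter_Ici])

lemma mass_superlevel_eq_sum_indicator (h r : S → ℝ) (θ : ℝ) :
    mass r {x | θ < h x} = ∑ x, (Iio (h x)).indicator (fun _ => r x) θ := by
  simp only [mass, indicator, Set.mem_ofPred_eq, Set.mem_Iio]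

lemma integrableOn_mass_superlevel (h r : S → ℝ) (c : ℝ) :
    IntegrableOn (fun θ => mass r {x | θ < h x}) (Ici c) := by
  simp_rw [mass_superlevel_eq_sum_indicator]
  exact integrable_finsetSum _ fun x _ => integrableOn_Ici_indicator_Iio_const _ _ _

lemma setIntegral_Ici_mass_superlevel (h r : S → ℝ) {c : ℝ} (hc : ∀ x, c ≤ h x) :
    ∫ θ in Ici c, mass r {x | θ < h x} = ∑ x, r x * (h x - c) := by
  simp_rw [mass_superlevel_eq_sum_indicator]
  rw [integral_finsetSum _ fun x _ => integrableOn_Ici_indicator_Iio_const _ _ _]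
  refine Finset.sum_congr rfl fun x _ => ?_
  rw [integral_indicator_const _ measurableSet_Iio, measureReal_restrict_apply measurableSet_Iio,
    Iio_inter_Ici, Real.volume_real_Ico_of_le (hc x), smul_eq_mul, mul_comm]

lemma sum_mul_le_sum_mul_of_mass_superlevel_le {h g r s : S → ℝ} (hsum : ∑ x, r x = ∑ x, s x)
    (hlevel : ∀ θ, mass r {x | θ < h x} ≤ mass s {x | θ < g x}) :
    ∑ x, r x * h x ≤ ∑ x, s x * g x := by
  obtain ⟨c₁, hc₁⟩ := (Set.finite_range h).bddBelow
  obtain ⟨c₂, hc₂⟩ := (Set.finite_range g).bddBelow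
  have hch : ∀ x, min c₁ c₂ ≤ h x := fun x => (min_le_left _ _).trans (hc₁ ⟨x, rfl⟩)
  have hcg : ∀ x, min c₁ c₂ ≤ g x := fun x => (min_le_right _ _).trans (hc₂ ⟨x, rfl⟩)
  have key := setIntegral_mono (s := Ici (min c₁ c₂)) (integrableOn_mass_superlevel h r _)
    (integrableOn_mass_superlevel g s _) hlevel
  rw [setIntegral_Ici_mass_superlevel h r hch, setIntegral_Ici_mass_superlevel g s hcg] at key
  simp only [mul_sub, Finset.sum_sub_distrib, ← Finset.sum_mul, hsum] at key
  linarith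

end Dominance

section Transport

variable {V : Type*}

lemma convex_setOf_isStochastic_isLocalMatrix [Fintype V] (E : V → V → Prop) :
    Convex ℝ {M : V → V → ℝ | IsStochastic M ∧ IsLocalMatrix E M} := by
  rintro M ⟨⟨hM0, hM1⟩, hMl⟩ N ⟨⟨hN0, hN1⟩, hNl⟩ a b ha hb hab
  refine ⟨⟨fun v' v => ?_, fun v => ?_⟩, fun v' v hv => ?_⟩
  · simp only [Pi.add_apply, Pi.smul_apply, smul_eq_mul]
    exact add_nonneg (mul_nonneg ha (hM0 v' v)) (mul_nonneg hb (hN0 v' v))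
  · simp [Finset.sum_add_distrib, ← Finset.mul_sum, hM1, hN1, hab]
  · simp [hMl v' v hv, hNl v' v hv]

lemma isLinearMap_matVec [Fintype V] (p : V → ℝ) :
    IsLinearMap ℝ fun M : V → V → ℝ => matVec M p :=
  ⟨fun M N => by ext; simp [matVec, add_mul, Finset.sum_add_distrib],
    fun a M => by ext; simp [matVec, mul_assoc, Finset.mul_sum]⟩

def deterministicMatrix [DecidableEq V] (σ : V → V) : V → V → ℝ :=
  fun v' v => if v' = σ v then 1 else 0

lemma isLocalMatrix_deterministicMatrix [DecidableEq V] {E : V → V → Prop} {σ : V → V}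
    (hσ : ∀ v, E v (σ v)) : IsLocalMatrix E (deterministicMatrix σ) := by
  intro v' v hv
  have : v' ≠ σ v := by rintro rfl; exact hv (hσ v)
  simp [deterministicMatrix, this]

def localDeterministicImages [Fintype V] [DecidableEq V] (E : V → V → Prop) (p : V → ℝ) :
    Set (V → ℝ) :=
  {r | ∃ σ : V → V, (∀ v, E v (σ v)) ∧ matVec (deterministicMatrix σ) p = r}

lemma isStochastic_deterministicMatrix [Fintype V] [DecidableEq V] (σ : V → V) :
    IsStochastic (deterministicMatrix σ) :=
  ⟨fun _ _ => by unfold deterministicMatrix; split <;> norm_num,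
    fun v => by simp [deterministicMatrix]⟩

lemma sum_matVec_deterministicMatrix_mul [Fintype V] [DecidableEq V] (σ : V → V) (p φ : V → ℝ) :
    ∑ v', matVec (deterministicMatrix σ) p v' * φ v' = ∑ v, p v * φ (σ v) := by
  simp only [matVec, deterministicMatrix, Finset.sum_mul, ite_mul, one_mul, zero_mul]
  rw [Finset.sum_comm]
  simp

lemma exists_local_stochastic_of_mem_convexHull [Fintype V] [DecidableEq V] {E : V → V → Prop}
    {p p' : V → ℝ} (hp' : p' ∈ convexHull ℝ (localDeterministicImages E p)) :
    ∃ M, IsStochastic M ∧ IsLocalMatrix E M ∧ matVec M p = p' := by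
  have hsub : localDeterministicImages E p ⊆
      (fun M => matVec M p) '' {M | IsStochastic M ∧ IsLocalMatrix E M} := by
    rintro _ ⟨σ, hσ, rfl⟩
    exact ⟨_, ⟨isStochastic_deterministicMatrix σ, isLocalMatrix_deterministicMatrix hσ⟩, rfl⟩
  obtain ⟨M, ⟨hMs, hMl⟩, hMp⟩ := convexHull_min hsub
    ((convex_setOf_isStochastic_isLocalMatrix E).is_linear_image (isLinearMap_matVec p)) hp'
  exact ⟨M, hMs, hMl, hMp⟩

lemma mem_convexHull_of_hall [Fintype V] [DecidableEq V] {E : V → V → Prop} (hloop : ∀ v, E v v)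
    {p p' : V → ℝ} (hsum : ∑ v, p' v = ∑ v, p v)
    (hall : ∀ X : Set V, mass p' X ≤ mass p {v | ∃ v' ∈ X, E v v'}) :
    p' ∈ convexHull ℝ (localDeterministicImages E p) := by
  set D := localDeterministicImages E p
  have hD : D.Finite := (Set.finite_range fun σ => matVec (deterministicMatrix σ) p).subset
    (by rintro _ ⟨σ, -, rfl⟩; exact ⟨σ, rfl⟩)
  by_contra hp'
  obtain ⟨f, u, hfD, hfp'⟩ := geometric_hahn_banach_closed_point (convex_convexHull ℝ D)
    (hD.isCompact_convexHull ℝ).isClosed hp'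
  set φ : V → ℝ := fun v => f fun w => if v = w then 1 else 0
  have hf : ∀ r, f r = ∑ v, r v * φ v := fun r =>
    (LinearMap.pi_apply_eq_sum_univ (f : (V → ℝ) →ₗ[ℝ] ℝ) r)
  have hbest : ∀ v, ∃ w, E v w ∧ ∀ w', E v w' → φ w' ≤ φ w := fun v => by
    have : Nonempty {w // E v w} := ⟨⟨v, hloop v⟩⟩
    obtain ⟨⟨w, hw⟩, hmax⟩ := Finite.exists_max fun w : {w // E v w} => φ w
    exact ⟨w, hw, fun w' hw' => hmax ⟨w', hw'⟩⟩
  choose σ hσE hσmax using hbest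
  have hlt : ∑ v, p v * φ (σ v) < u := by
    rw [← sum_matVec_deterministicMatrix_mul, ← hf]
    exact hfD _ (subset_convexHull ℝ D ⟨σ, hσE, rfl⟩)
  have hle : ∑ v, p' v * φ v ≤ ∑ v, p v * φ (σ v) := by
    refine sum_mul_le_sum_mul_of_mass_superlevel_le hsum fun θ => ?_
    convert hall {w | θ < φ w} using 2
    ext v
    exact ⟨fun h => ⟨σ v, h, hσE v⟩, fun ⟨w, hw, hvw⟩ => hw.trans_le (hσmax v w hvw)⟩
  rw [hf] at hfp'
  linarith

end Transport

section LocalFamily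

variable {V : Type*}

lemma union_nbhd_eq {E : V → V → Prop} (hloop : ∀ v, E v v) (X : Set V) :
    X ∪ nbhd E X = {v | ∃ v' ∈ X, E v v'} := by
  ext v
  by_cases hv : v ∈ X
  · simpa [hv] using ⟨v, hv, hloop v⟩
  · simp [nbhd, hv]

variable [Fintype V]

lemma mass_union_of_disjoint (p : V → ℝ) {X Y : Set V} (h : Disjoint X Y) :
    mass p (X ∪ Y) = mass p X + mass p Y := by
  simp only [mass, Set.indicator_union_of_disjoint h, Finset.sum_add_distrib]

lemma IsLocalFamily.mass_succ_le {E : V → V → Prop} {Ψ : ℕ → (V → ℝ) →ₗ[ℝ] (V → ℝ)}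
    (hlocal : IsLocalFamily E Ψ) (hloop : ∀ v, E v v) {p₀ : V → ℝ} (hp₀ : IsProbDist p₀)
    (t : ℕ) (X : Set V) :
    mass (Ψ (t + 1) p₀) X ≤ mass (Ψ t p₀) {v | ∃ v' ∈ X, E v v'} := by
  rw [← union_nbhd_eq hloop,
    mass_union_of_disjoint _ (Set.disjoint_left.2 fun _ hv hv' => hv'.1 hv)]
  exact hlocal X p₀ hp₀ t

lemma IsLocalFamily.exists_step_matrix [DecidableEq V] {E : V → V → Prop}
    {Ψ : ℕ → (V → ℝ) →ₗ[ℝ] (V → ℝ)} (hlocal : IsLocalFamily E Ψ) (hloop : ∀ v, E v v)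
    (hΨstoch : ∀ (t : ℕ) (p : V → ℝ), IsProbDist p → IsProbDist (Ψ t p))
    {p₀ : V → ℝ} (hp₀ : IsProbDist p₀) (t : ℕ) :
    ∃ M, IsStochastic M ∧ IsLocalMatrix E M ∧ matVec M (Ψ t p₀) = Ψ (t + 1) p₀ :=
  exists_local_stochastic_of_mem_convexHull <| mem_convexHull_of_hall hloop
    (by rw [(hΨstoch _ _ hp₀).2, (hΨstoch _ _ hp₀).2]) (hlocal.mass_succ_le hloop hp₀ t)

end LocalFamily

section Clock

variable {V : Type*}

/-- The coin `(u, s)` records the starting vertex `u` and a clock `s`. The clock wraps around in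
`Fin (T + 1)`, which is harmless since only the times `t ≤ T` are simulated. -/
def clockChain [DecidableEq V] (M : V → ℕ → V → V → ℝ) (T : ℕ) :
    (V × Fin (T + 1)) × V → (V × Fin (T + 1)) × V → ℝ :=
  fun y x => if y.1 = (x.1.1, x.1.2 + 1) then M x.1.1 x.1.2 y.2 x.2 else 0

def clockDist (p : V → ℝ) (q : V → ℕ → V → ℝ) (T t : ℕ) : (V × Fin (T + 1)) × V → ℝ :=
  fun x => if (x.1.2 : ℕ) = t then p x.1.1 * q x.1.1 t x.2 else 0

lemma margDist_clockDist [Fintype V] (p : V → ℝ) (q : V → ℕ → V → ℝ) {T t : ℕ}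
    (ht : t ≤ T) : margDist (clockDist p q T t) = ∑ u, p u • q u t := by
  ext v
  simp only [margDist, clockDist, Fintype.sum_prod_type, Finset.sum_apply, Pi.smul_apply,
    smul_eq_mul]
  refine Finset.sum_congr rfl fun u _ => ?_
  rw [Finset.sum_eq_single_of_mem (⟨t, by omega⟩ : Fin (T + 1)) (Finset.mem_univ _)]
  · simp
  · intro s _ hs
    rw [if_neg fun h => hs (Fin.ext h)]

variable [DecidableEq V] {M : V → ℕ → V → V → ℝ} {q : V → ℕ → V → ℝ} {T : ℕ}

lemma isLocalLift_clockChain {E : V → V → Prop} (hM : ∀ u t, IsLocalMatrix E (M u t)) :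
    IsLocalLift E (clockChain M T) := by
  intro c' v' c v hv
  simp [clockChain, hM _ _ v' v hv]

lemma liftInit_eq_clockDist_zero (hq0 : ∀ u, q u 0 = Pi.single u 1) (p : V → ℝ) :
    liftInit (fun u => (u, 0)) p = clockDist p q T 0 := by
  ext ⟨⟨u, s⟩, v⟩
  simp only [liftInit, clockDist, hq0, Prod.mk.injEq, Fin.ext_iff, Fin.val_zero]
  by_cases hs : (s : ℕ) = 0 <;> by_cases huv : u = v <;> simp [hs, huv]

variable [Fintype V]

lemma isStochastic_clockChain (hM : ∀ u t, IsStochastic (M u t)) :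
    IsStochastic (clockChain M T) := by
  refine ⟨fun y x => ?_, fun x => ?_⟩
  · unfold clockChain; split
    · exact (hM _ _).1 _ _
    · exact le_rfl
  · rw [Fintype.sum_prod_type]
    simp [clockChain, Finset.sum_ite_irrel, (hM _ _).2]

lemma matVec_clockChain_clockDist {t : ℕ} (hMq : ∀ u, matVec (M u t) (q u t) = q u (t + 1))
    (ht : t < T) (p : V → ℝ) :
    matVec (clockChain M T) (clockDist p q T t) = clockDist p q T (t + 1) := by
  ext ⟨⟨u', s'⟩, v'⟩
  set τ : Fin (T + 1) := ⟨t, by omega⟩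
  have hτ : s' = τ + 1 ↔ (s' : ℕ) = t + 1 := by
    rw [Fin.ext_iff, Fin.val_add_one_of_lt (by simpa [Fin.lt_def] using ht)]
  simp only [matVec, clockChain, clockDist, Fintype.sum_prod_type]
  rw [Finset.sum_eq_single u' (fun u _ hu => by simp [Ne.symm hu]) (by simp),
    Finset.sum_eq_single τ (fun s _ hs => ?_) (by simp)]
  · by_cases hs' : s' = τ + 1
    · rw [if_pos (hτ.1 hs'), ← hMq u']
      have hτt : (τ : ℕ) = t := rfl
      simp only [hs', hτt, if_true, matVec, Finset.mul_sum]
      exact Finset.sum_congr rfl fun v _ => by ring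
    · simp [hs', mt hτ.2 hs']
  · have : (s : ℕ) ≠ t := fun h => hs (Fin.ext h)
    simp [this]

lemma iterate_clockChain (hq0 : ∀ u, q u 0 = Pi.single u 1)
    (hMq : ∀ u t, matVec (M u t) (q u t) = q u (t + 1)) (p : V → ℝ) {t : ℕ} (ht : t ≤ T) :
    (matVec (clockChain M T))^[t] (liftInit (fun u => (u, 0)) p) = clockDist p q T t := by
  induction t with
  | zero => exact liftInit_eq_clockDist_zero hq0 p
  | succ t ih =>
    rw [Function.iterate_succ_apply', ih (by omega),
      matVec_clockChain_clockDist (fun u => hMq u t) (by omega)]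

end Clock

section Simulation

variable {C C' V : Type*} [Fintype C] [Fintype C'] [Fintype V]

def IsLiftedSimulation (E : V → V → Prop) (Ψ : ℕ → (V → ℝ) →ₗ[ℝ] (V → ℝ)) (T : ℕ)
    (P : C × V → C × V → ℝ) (ca : V → C) : Prop :=
  IsStochastic P ∧ IsLocalLift E P ∧
    ∀ p : V → ℝ, IsProbDist p → ∀ t : ℕ, t ≤ T → margDist ((matVec P)^[t] (liftInit ca p)) = Ψ t p

lemma matVec_comp_equiv {α β : Type*} [Fintype α] [Fintype β] (P : α → α → ℝ) (e : β ≃ α)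
    (p : α → ℝ) : matVec (fun y x => P (e y) (e x)) (p ∘ e) = matVec P p ∘ e := by
  ext y
  exact e.sum_comp fun x => P (e y) x * p x

lemma IsLiftedSimulation.reindex {E : V → V → Prop} {Ψ : ℕ → (V → ℝ) →ₗ[ℝ] (V → ℝ)} {T : ℕ}
    {P : C × V → C × V → ℝ} {ca : V → C} (h : IsLiftedSimulation E Ψ T P ca) (e : C ≃ C') :
    IsLiftedSimulation E Ψ T (fun y x => P (e.symm y.1, y.2) (e.symm x.1, x.2)) (e ∘ ca) := by
  obtain ⟨⟨hP0, hP1⟩, hPl, hPsim⟩ := h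
  set ε := (e.prodCongr (Equiv.refl V)).symm
  have hinit : ∀ p, liftInit (e ∘ ca) p = liftInit ca p ∘ ε := fun p => by
    ext ⟨c, v⟩
    simp only [ε, liftInit, Function.comp_apply]
    congr 1
    exact propext e.symm_apply_eq.symm
  refine ⟨⟨fun y x => hP0 _ _, fun x => ?_⟩, fun c' v' c v hv => hPl _ _ _ _ hv,
    fun p hp t ht => ?_⟩
  · rw [← hP1 (ε x)]
    exact ε.sum_comp fun y => P y (ε x)
  · have hiter : (matVec fun y x => P (e.symm y.1, y.2) (e.symm x.1, x.2))^[t]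
        (liftInit ca p ∘ ε) = (matVec P)^[t] (liftInit ca p) ∘ ε :=
      ((Function.Semiconj.iterate_right (f := fun r => r ∘ ε)
        (fun r => (matVec_comp_equiv P ε r).symm) t) (liftInit ca p)).symm
    rw [hinit, hiter, ← hPsim p hp t ht]
    ext v
    exact e.symm.sum_comp fun c => (matVec P)^[t] (liftInit ca p) (c, v)

end Simulation

lemma isProbDist_single {V : Type*} [Fintype V] [DecidableEq V] (u : V) :
    IsProbDist (Pi.single u 1 : V → ℝ) :=
  ⟨fun v => by rw [Pi.single_apply]; split <;> norm_num, by simp⟩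

lemma isLiftedSimulation_clockChain {V : Type*} [Fintype V] [DecidableEq V] {E : V → V → Prop}
    {Ψ : ℕ → (V → ℝ) →ₗ[ℝ] (V → ℝ)} (hΨ0 : Ψ 0 = LinearMap.id) {M : V → ℕ → V → V → ℝ}
    (hMs : ∀ u t, IsStochastic (M u t)) (hMl : ∀ u t, IsLocalMatrix E (M u t))
    (hMq : ∀ u t, matVec (M u t) (Ψ t (Pi.single u 1)) = Ψ (t + 1) (Pi.single u 1)) (T : ℕ) :
    IsLiftedSimulation E Ψ T (clockChain M T) fun u => (u, 0) := by
  refine ⟨isStochastic_clockChain hMs, isLocalLift_clockChain hMl, fun p _ t ht => ?_⟩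
  rw [iterate_clockChain (fun u => by rw [hΨ0]; rfl) hMq p ht, margDist_clockDist p _ ht]
  conv_rhs => rw [← Finset.univ_sum_single p]
  simp [← map_smul, ← Pi.single_smul]

/-- any local family of stochastic linear maps can be simulated exactly,
up to any fixed time horizon `T`, by a lifted Markov chain with coin set of
cardinality `|V|·(T+1)`. -/
theorem lmc_finite_horizon_simulation
    {V : Type} [Fintype V] (E : V → V → Prop) (hloop : ∀ v, E v v)
    (Ψ : ℕ → (V → ℝ) →ₗ[ℝ] (V → ℝ))
    (hΨ0 : Ψ 0 = LinearMap.id)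
    (hΨstoch : ∀ (t : ℕ) (p : V → ℝ), IsProbDist p → IsProbDist (Ψ t p))
    (hlocal : IsLocalFamily E Ψ)
    (T : ℕ) :
    ∃ (P : Fin (Fintype.card V * (T+1)) × V → Fin (Fintype.card V * (T+1)) × V → ℝ)
      (ca : V → Fin (Fintype.card V * (T+1))),
      IsStochastic P ∧ IsLocalLift E P ∧
      ∀ p : V → ℝ, IsProbDist p → ∀ t : ℕ, t ≤ T →
        margDist ((matVec P)^[t] (liftInit ca p)) = Ψ t p := by
  classical
  choose M hMs hMl hMq using fun u t =>
    hlocal.exists_step_matrix hloop hΨstoch (isProbDist_single u) t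
  have coins : V × Fin (T + 1) ≃ Fin (Fintype.card V * (T + 1)) :=
    ((Fintype.equivFin V).prodCongr (Equiv.refl _)).trans finProdFinEquiv
  exact ⟨_, _, (isLiftedSimulation_clockChain hΨ0 hMs hMl hMq T).reindex coins⟩
end

section
/- (Local simulability / stochastic bridge.) Let (V,E) be a graph and Ψ_t a local family of stochastic linear maps on the graph. Then for every probability distribution p₀ on V and every t ≥ 1 there exists a stochastic matrix P on V that is local with respect to the graph (P(v',v) = 0 whenever (v,v') ∉ E) and satisfies Ψ_t[p₀] = P · (Ψ_{t−1}[p₀]). -/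
open Finset

section GaleAux
open scoped Classical
variable {V : Type} [Fintype V]

noncomputable def NN (E : V → V → Prop) (X : Finset V) : Finset V :=
  univ.filter fun v => ∃ v' ∈ X, E v v'

lemma mem_NN {E : V → V → Prop} {X : Finset V} {v : V} : v ∈ NN E X ↔ ∃ v' ∈ X, E v v' := by
  simp [NN]

lemma NN_mono {E : V → V → Prop} {X Y : Finset V} (h : X ⊆ Y) : NN E X ⊆ NN E Y := by
  intro w hw
  rcases mem_NN.1 hw with ⟨u, hu, hE⟩
  exact mem_NN.2 ⟨u, h hu, hE⟩

lemma NN_union {E : V → V → Prop} (X Y : Finset V) : NN E (X ∪ Y) = NN E X ∪ NN E Y := by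
  ext w
  simp only [mem_NN, Finset.mem_union]
  constructor
  · rintro ⟨u, hu, hE⟩
    rcases hu with h | h
    · exact Or.inl ⟨u, h, hE⟩
    · exact Or.inr ⟨u, h, hE⟩
  · rintro (⟨u, hu, hE⟩ | ⟨u, hu, hE⟩)
    · exact ⟨u, Or.inl hu, hE⟩
    · exact ⟨u, Or.inr hu, hE⟩

lemma gale (E : V → V → Prop) :
    ∀ n : ℕ, ∀ p q : V → ℝ, (∀ v, 0 ≤ p v) → (∀ v, 0 ≤ q v) →
    (∑ v, p v = ∑ v, q v) →
    (∀ X : Finset V, ∑ v ∈ X, q v ≤ ∑ v ∈ NN E X, p v) →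
    ((univ.filter fun v => p v ≠ 0).card + (univ.filter fun v => q v ≠ 0).card ≤ n) →
    ∃ f : V → V → ℝ, (∀ v' v, 0 ≤ f v' v) ∧ (∀ v' v, ¬ E v v' → f v' v = 0) ∧
      (∀ v, ∑ v', f v' v = p v) ∧ (∀ v', ∑ v, f v' v = q v') := by
  intro n
  induction n with
  | zero =>
    intro p q hp hq htot hhall hcard
    have hq0 : ∀ v, q v = 0 := by
      intro v
      by_contra hv
      have : v ∈ univ.filter fun v => q v ≠ 0 := by simp [hv]
      have := Finset.card_pos.2 ⟨v, this⟩
      omega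
    have hp0 : ∀ v, p v = 0 := by
      intro v
      by_contra hv
      have : v ∈ univ.filter fun v => p v ≠ 0 := by simp [hv]
      have := Finset.card_pos.2 ⟨v, this⟩
      omega
    exact ⟨0, fun _ _ => le_refl 0, fun _ _ _ => rfl,
      fun v => by simp [hp0 v], fun v => by simp [hq0 v]⟩
  | succ n ih =>
    intro p q hp hq htot hhall hcard
    by_cases hq0 : ∀ v, q v = 0
    · have hp0 : ∀ v, p v = 0 := by
        have h1 : ∑ v, p v = 0 := by
          rw [htot]; exact Finset.sum_eq_zero fun v _ => hq0 v
        intro v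
        exact (Finset.sum_eq_zero_iff_of_nonneg (fun v _ => hp v)).1 h1 v (mem_univ v)
      exact ⟨0, fun _ _ => le_refl 0, fun _ _ _ => rfl,
        fun v => by simp [hp0 v], fun v => by simp [hq0 v]⟩
    push_neg at hq0
    obtain ⟨v', hv'⟩ := hq0
    have hqv' : 0 < q v' := (hq v').lt_of_ne (Ne.symm hv')
    have h1 : q v' ≤ ∑ w ∈ NN E {v'}, p w := by
      have := hhall {v'}; simpa using this
    have hex : ∃ v ∈ NN E {v'}, 0 < p v := by
      by_contra hc
      push_neg at hc
      have : ∑ w ∈ NN E {v'}, p w ≤ 0 :=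
        Finset.sum_nonpos fun w hw => hc w hw
      linarith
    obtain ⟨v, hvN, hpv⟩ := hex
    have hE : E v v' := by
      rcases mem_NN.1 hvN with ⟨w, hw, hEw⟩
      rw [Finset.mem_singleton] at hw; subst hw; exact hEw
    set slack : Finset V → ℝ := fun X => (∑ w ∈ NN E X, p w) - ∑ w ∈ X, q w with hslack
    set F : Finset (Finset V) :=
      univ.filter (fun X => (0 < ∑ w ∈ X, q w) ∧ v ∈ NN E X ∧ v' ∉ X) with hF
    set ε : ℝ := min (min (p v) (q v')) (if h : F.Nonempty then F.inf' h slack else p v) with hε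
    have hε_le_pv : ε ≤ p v := le_trans (min_le_left _ _) (min_le_left _ _)
    have hε_le_qv' : ε ≤ q v' := le_trans (min_le_left _ _) (min_le_right _ _)
    have hε_le_slack : ∀ X ∈ F, ε ≤ slack X := by
      intro X hX
      have hne : F.Nonempty := ⟨X, hX⟩
      calc ε ≤ _ := min_le_right _ _
        _ ≤ slack X := by rw [dif_pos hne]; exact Finset.inf'_le _ hX
    have hε_nonneg : 0 ≤ ε := by
      apply le_min (le_min (le_of_lt hpv) (le_of_lt hqv'))
      split_ifs with h
      · apply Finset.le_inf'
        intro X hX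
        simp only [hslack]
        linarith [hhall X]
      · exact le_of_lt hpv
    set p1 : V → ℝ := fun w => p w - if w = v then ε else 0 with hp1def
    set q1 : V → ℝ := fun w => q w - if w = v' then ε else 0 with hq1def
    have hp1 : ∀ w, 0 ≤ p1 w := by
      intro w; simp only [hp1def]; split_ifs with h
      · subst h; linarith
      · simpa using hp w
    have hq1 : ∀ w, 0 ≤ q1 w := by
      intro w; simp only [hq1def]; split_ifs with h
      · subst h; linarith
      · simpa using hq w
    have sump1 : ∀ X : Finset V, ∑ w ∈ X, p1 w = (∑ w ∈ X, p w) - (if v ∈ X then ε else 0) := by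
      intro X
      simp only [hp1def, Finset.sum_sub_distrib]
      congr 1
      exact Finset.sum_ite_eq' X v (fun _ => ε)
    have sumq1 : ∀ X : Finset V, ∑ w ∈ X, q1 w = (∑ w ∈ X, q w) - (if v' ∈ X then ε else 0) := by
      intro X
      simp only [hq1def, Finset.sum_sub_distrib]
      congr 1
      exact Finset.sum_ite_eq' X v' (fun _ => ε)
    have htot1 : ∑ w, p1 w = ∑ w, q1 w := by
      rw [sump1, sumq1]
      simp [htot]
    have hhall1 : ∀ X : Finset V, ∑ w ∈ X, q1 w ≤ ∑ w ∈ NN E X, p1 w := by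
      intro X
      rw [sumq1, sump1]
      by_cases hv'X : v' ∈ X
      · have hvNX : v ∈ NN E X := mem_NN.2 ⟨v', hv'X, hE⟩
        rw [if_pos hv'X, if_pos hvNX]
        linarith [hhall X]
      · rw [if_neg hv'X]
        by_cases hvNX : v ∈ NN E X
        · rw [if_pos hvNX]
          by_cases hqX : 0 < ∑ w ∈ X, q w
          · have hXF : X ∈ F := by
              rw [hF]; simp only [Finset.mem_filter]
              exact ⟨mem_univ X, hqX, hvNX, hv'X⟩
            have := hε_le_slack X hXF
            simp only [hslack] at this
            linarith
          · have h0 : ∑ w ∈ X, q w = 0 :=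
              le_antisymm (not_lt.1 hqX) (Finset.sum_nonneg fun w _ => hq w)
            have hnn : (0:ℝ) ≤ ∑ w ∈ NN E X, p1 w := Finset.sum_nonneg fun w _ => hp1 w
            rw [sump1, if_pos hvNX] at hnn
            rw [h0]
            linarith
        · rw [if_neg hvNX]
          linarith [hhall X]
    have hsupp1 : ∀ w, p1 w ≠ 0 → p w ≠ 0 := by
      intro w hw hpw
      apply hw
      simp only [hp1def]
      split_ifs with h
      · subst h
        have : ε = 0 := le_antisymm (hpw ▸ hε_le_pv) hε_nonneg
        rw [hpw, this]; ring
      · rw [hpw]; ring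
    have hsuppq1 : ∀ w, q1 w ≠ 0 → q w ≠ 0 := by
      intro w hw hqw
      apply hw
      simp only [hq1def]
      split_ifs with h
      · subst h
        have : ε = 0 := le_antisymm (hqw ▸ hε_le_qv') hε_nonneg
        rw [hqw, this]; ring
      · rw [hqw]; ring
    have hsubp : (univ.filter fun w => p1 w ≠ 0) ⊆ (univ.filter fun w => p w ≠ 0) := by
      intro w hw
      rw [Finset.mem_filter] at *
      exact ⟨hw.1, hsupp1 w hw.2⟩
    have hsubq : (univ.filter fun w => q1 w ≠ 0) ⊆ (univ.filter fun w => q w ≠ 0) := by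
      intro w hw
      rw [Finset.mem_filter] at *
      exact ⟨hw.1, hsuppq1 w hw.2⟩
    -- the "add ε on the edge (v', v)" combinator
    have key : ∀ f' : V → V → ℝ, (∀ w' w, 0 ≤ f' w' w) → (∀ w' w, ¬ E w w' → f' w' w = 0) →
        (∀ w, ∑ w', f' w' w = p1 w) → (∀ w', ∑ w, f' w' w = q1 w') →
        ∃ f : V → V → ℝ, (∀ w' w, 0 ≤ f w' w) ∧ (∀ w' w, ¬ E w w' → f w' w = 0) ∧
          (∀ w, ∑ w', f w' w = p w) ∧ (∀ w', ∑ w, f w' w = q w') := by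
      intro f' hnn hloc hsrc htgt
      refine ⟨fun w' w => f' w' w + if w' = v' ∧ w = v then ε else 0, ?_, ?_, ?_, ?_⟩
      · intro w' w
        have := hnn w' w
        dsimp only
        split_ifs <;> linarith
      · intro w' w hEw
        dsimp only
        rw [hloc w' w hEw, zero_add]
        rw [if_neg]
        rintro ⟨rfl, rfl⟩; exact hEw hE
      · intro w
        dsimp only
        rw [Finset.sum_add_distrib, hsrc w]
        have hsum : ∑ w' : V, (if w' = v' ∧ w = v then ε else 0) = if w = v then ε else 0 := by
          by_cases h : w = v
          · simp only [h, and_true]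
            rw [Finset.sum_ite_eq' univ v' (fun _ => ε)]
            simp
          · simp [h]
        rw [hsum]
        simp only [hp1def]
        ring
      · intro w'
        dsimp only
        rw [Finset.sum_add_distrib, htgt w']
        have hsum : ∑ w : V, (if w' = v' ∧ w = v then ε else 0) = if w' = v' then ε else 0 := by
          by_cases h : w' = v'
          · simp only [h, true_and]
            rw [Finset.sum_ite_eq' univ v (fun _ => ε)]
            simp
          · simp [h]
        rw [hsum]
        simp only [hq1def]
        ring
    by_cases hεpv : ε = p v
    · -- supp p shrinks
      have hvp : v ∈ univ.filter fun w => p w ≠ 0 := by simp [ne_of_gt hpv]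
      have hvp1 : v ∉ univ.filter fun w => p1 w ≠ 0 := by
        simp only [Finset.mem_filter, not_and, mem_univ, forall_true_left]
        intro h
        apply h
        simp [hp1def, hεpv]
      have hssub : (univ.filter fun w => p1 w ≠ 0) ⊂ (univ.filter fun w => p w ≠ 0) :=
        ⟨hsubp, fun hcon => hvp1 (hcon hvp)⟩
      have hcard1 : (univ.filter fun w => p1 w ≠ 0).card + (univ.filter fun w => q1 w ≠ 0).card ≤ n := by
        have h1 := Finset.card_lt_card hssub
        have h2 := Finset.card_le_card hsubq
        omega
      obtain ⟨f', h1, h2, h3, h4⟩ := ih p1 q1 hp1 hq1 htot1 hhall1 hcard1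
      exact key f' h1 h2 h3 h4
    by_cases hεqv' : ε = q v'
    · -- supp q shrinks
      have hvq : v' ∈ univ.filter fun w => q w ≠ 0 := by simp [ne_of_gt hqv']
      have hvq1 : v' ∉ univ.filter fun w => q1 w ≠ 0 := by
        simp only [Finset.mem_filter, not_and, mem_univ, forall_true_left]
        intro h
        apply h
        simp [hq1def, hεqv']
      have hssub : (univ.filter fun w => q1 w ≠ 0) ⊂ (univ.filter fun w => q w ≠ 0) :=
        ⟨hsubq, fun hcon => hvq1 (hcon hvq)⟩
      have hcard1 : (univ.filter fun w => p1 w ≠ 0).card + (univ.filter fun w => q1 w ≠ 0).card ≤ n := by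
        have h1 := Finset.card_lt_card hssub
        have h2 := Finset.card_le_card hsubp
        omega
      obtain ⟨f', h1, h2, h3, h4⟩ := ih p1 q1 hp1 hq1 htot1 hhall1 hcard1
      exact key f' h1 h2 h3 h4
    -- tight-set case
    have hFne : F.Nonempty := by
      by_contra hne
      rw [dif_neg hne] at hε
      rcases min_cases (min (p v) (q v')) (p v) with ⟨h1, _⟩ | ⟨h1, _⟩
      · rcases min_cases (p v) (q v') with ⟨h2, _⟩ | ⟨h2, _⟩
        · exact hεpv (hε.trans (h1.trans h2))
        · exact hεqv' (hε.trans (h1.trans h2))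
      · exact hεpv (hε.trans h1)
    have hεb : ε = F.inf' hFne slack := by
      rw [dif_pos hFne] at hε
      rcases min_cases (min (p v) (q v')) (F.inf' hFne slack) with ⟨h1, _⟩ | ⟨h1, _⟩
      · exfalso
        rcases min_cases (p v) (q v') with ⟨h2, _⟩ | ⟨h2, _⟩
        · exact hεpv (hε.trans (h1.trans h2))
        · exact hεqv' (hε.trans (h1.trans h2))
      · exact hε.trans h1
    obtain ⟨X, hXF, hXslack⟩ := Finset.exists_mem_eq_inf' hFne slack
    have hεX : ε = slack X := hεb.trans hXslack
    rw [hF, Finset.mem_filter] at hXF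
    obtain ⟨-, hqX, hvNX, hv'X⟩ := hXF
    have hεlt : ε < q v' := lt_of_le_of_ne hε_le_qv' hεqv'
    have hq1X : ∑ w ∈ X, q1 w = ∑ w ∈ X, q w := by
      rw [sumq1, if_neg hv'X]; ring
    have htight : ∑ w ∈ NN E X, p1 w = ∑ w ∈ X, q1 w := by
      rw [sump1, if_pos hvNX, hq1X]
      simp only [hslack] at hεX
      linarith
    set A : Finset V := NN E X with hA
    set pa : V → ℝ := fun w => if w ∈ A then p1 w else 0 with hpa
    set pb : V → ℝ := fun w => p1 w - pa w with hpb
    set qa : V → ℝ := fun w => if w ∈ X then q1 w else 0 with hqa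
    set qb : V → ℝ := fun w => q1 w - qa w with hqb
    have hpa0 : ∀ w, 0 ≤ pa w := by
      intro w; simp only [hpa]; split_ifs
      · exact hp1 w
      · exact le_refl 0
    have hpb0 : ∀ w, 0 ≤ pb w := by
      intro w; simp only [hpb, hpa]; split_ifs
      · simp
      · simpa using hp1 w
    have hqa0 : ∀ w, 0 ≤ qa w := by
      intro w; simp only [hqa]; split_ifs
      · exact hq1 w
      · exact le_refl 0
    have hqb0 : ∀ w, 0 ≤ qb w := by
      intro w; simp only [hqb, hqa]; split_ifs
      · simp
      · simpa using hq1 w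
    have sumpa : ∀ Y : Finset V, ∑ w ∈ Y, pa w = ∑ w ∈ Y ∩ A, p1 w := by
      intro Y; simp only [hpa]; exact Finset.sum_ite_mem Y A p1
    have sumqa : ∀ Y : Finset V, ∑ w ∈ Y, qa w = ∑ w ∈ Y ∩ X, q1 w := by
      intro Y; simp only [hqa]; exact Finset.sum_ite_mem Y X q1
    have sumpb : ∀ Y : Finset V, ∑ w ∈ Y, pb w = ∑ w ∈ Y, p1 w - ∑ w ∈ Y ∩ A, p1 w := by
      intro Y; simp only [hpb, Finset.sum_sub_distrib, sumpa]
    have sumqb : ∀ Y : Finset V, ∑ w ∈ Y, qb w = ∑ w ∈ Y, q1 w - ∑ w ∈ Y ∩ X, q1 w := by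
      intro Y; simp only [hqb, Finset.sum_sub_distrib, sumqa]
    have huA : univ ∩ A = A := Finset.univ_inter A
    have huX : univ ∩ X = X := Finset.univ_inter X
    have htota : ∑ w, pa w = ∑ w, qa w := by
      rw [sumpa, sumqa, huA, huX, htight]
    have htotb : ∑ w, pb w = ∑ w, qb w := by
      rw [sumpb, sumqb, huA, huX, htight, htot1]
    have hhalla : ∀ Y : Finset V, ∑ w ∈ Y, qa w ≤ ∑ w ∈ NN E Y, pa w := by
      intro Y
      rw [sumqa, sumpa]
      calc ∑ w ∈ Y ∩ X, q1 w ≤ ∑ w ∈ NN E (Y ∩ X), p1 w := hhall1 _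
        _ ≤ ∑ w ∈ NN E Y ∩ A, p1 w := by
            apply Finset.sum_le_sum_of_subset_of_nonneg
            · intro w hw
              exact Finset.mem_inter.2 ⟨NN_mono Finset.inter_subset_left hw,
                NN_mono Finset.inter_subset_right hw⟩
            · intro w _ _; exact hp1 w
    have hhallb : ∀ Y : Finset V, ∑ w ∈ Y, qb w ≤ ∑ w ∈ NN E Y, pb w := by
      intro Y
      rw [sumqb, sumpb]
      have hZ := hhall1 (X ∪ (Y \ X))
      have hdisj : Disjoint X (Y \ X) := Finset.disjoint_sdiff
      rw [Finset.sum_union hdisj] at hZ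
      have hNZ : NN E (X ∪ (Y \ X)) ⊆ A ∪ (NN E Y \ A) := by
        intro w hw
        by_cases hwA : w ∈ A
        · exact Finset.mem_union.2 (Or.inl hwA)
        · refine Finset.mem_union.2 (Or.inr (Finset.mem_sdiff.2 ⟨?_, hwA⟩))
          rw [NN_union] at hw
          rcases Finset.mem_union.1 hw with h | h
          · exact absurd h hwA
          · exact NN_mono Finset.sdiff_subset h
      have h2 : ∑ w ∈ NN E (X ∪ (Y \ X)), p1 w ≤ ∑ w ∈ A ∪ (NN E Y \ A), p1 w :=
        Finset.sum_le_sum_of_subset_of_nonneg hNZ (fun w _ _ => hp1 w)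
      have hdisj2 : Disjoint A (NN E Y \ A) := Finset.disjoint_sdiff
      rw [Finset.sum_union hdisj2] at h2
      have h3 : ∑ w ∈ NN E Y ∩ A, p1 w + ∑ w ∈ NN E Y \ A, p1 w = ∑ w ∈ NN E Y, p1 w :=
        Finset.sum_inter_add_sum_sdiff _ _ _
      have h4 : ∑ w ∈ Y, q1 w - ∑ w ∈ Y ∩ X, q1 w = ∑ w ∈ Y \ X, q1 w := by
        have := Finset.sum_inter_add_sum_sdiff Y X q1
        linarith
      rw [h4]
      rw [← htight] at hZ
      linarith
    -- supports
    have hsuppqa : (univ.filter fun w => qa w ≠ 0) ⊆ (univ.filter fun w => q w ≠ 0) := by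
      intro w hw0
      rw [Finset.mem_filter] at *
      refine ⟨hw0.1, ?_⟩
      have hw := hw0.2
      apply hsuppq1 w
      intro hq1w
      apply hw
      simp only [hqa, hq1w]
      split_ifs <;> rfl
    have hsuppqb : (univ.filter fun w => qb w ≠ 0) ⊆ (univ.filter fun w => q w ≠ 0) := by
      intro w hw0
      rw [Finset.mem_filter] at *
      refine ⟨hw0.1, ?_⟩
      have hw := hw0.2
      apply hsuppq1 w
      intro hq1w
      apply hw
      simp only [hqb, hqa, hq1w]
      split_ifs <;> ring
    have hsupppa : (univ.filter fun w => pa w ≠ 0) ⊆ (univ.filter fun w => p w ≠ 0) := by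
      intro w hw0
      rw [Finset.mem_filter] at *
      refine ⟨hw0.1, ?_⟩
      have hw := hw0.2
      apply hsupp1 w
      intro hp1w
      apply hw
      simp only [hpa, hp1w]
      split_ifs <;> rfl
    have hsupppb : (univ.filter fun w => pb w ≠ 0) ⊆ (univ.filter fun w => p w ≠ 0) := by
      intro w hw0
      rw [Finset.mem_filter] at *
      refine ⟨hw0.1, ?_⟩
      have hw := hw0.2
      apply hsupp1 w
      intro hp1w
      apply hw
      simp only [hpb, hpa, hp1w]
      split_ifs <;> ring
    have hssa : (univ.filter fun w => qa w ≠ 0) ⊂ (univ.filter fun w => q w ≠ 0) := by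
      refine ⟨hsuppqa, fun hcon => ?_⟩
      have hvq : v' ∈ univ.filter fun w => q w ≠ 0 := by simp [ne_of_gt hqv']
      have := hcon hvq
      rw [Finset.mem_filter] at this
      apply this.2
      simp only [hqa, if_neg hv'X]
    have hwit : ∃ u ∈ X, q u ≠ 0 := by
      by_contra hc
      push_neg at hc
      have : ∑ w ∈ X, q w = 0 := Finset.sum_eq_zero fun w hw => hc w hw
      linarith
    obtain ⟨u, huX2, hqu⟩ := hwit
    have hssb : (univ.filter fun w => qb w ≠ 0) ⊂ (univ.filter fun w => q w ≠ 0) := by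
      refine ⟨hsuppqb, fun hcon => ?_⟩
      have hvq : u ∈ univ.filter fun w => q w ≠ 0 := by simp [hqu]
      have := hcon hvq
      rw [Finset.mem_filter] at this
      apply this.2
      simp only [hqb, hqa, if_pos huX2]
      ring
    have hcarda : (univ.filter fun w => pa w ≠ 0).card + (univ.filter fun w => qa w ≠ 0).card ≤ n := by
      have h1 := Finset.card_lt_card hssa
      have h2 := Finset.card_le_card hsupppa
      omega
    have hcardb : (univ.filter fun w => pb w ≠ 0).card + (univ.filter fun w => qb w ≠ 0).card ≤ n := by
      have h1 := Finset.card_lt_card hssb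
      have h2 := Finset.card_le_card hsupppb
      omega
    obtain ⟨fa, ha1, ha2, ha3, ha4⟩ := ih pa qa hpa0 hqa0 htota hhalla hcarda
    obtain ⟨fb, hb1, hb2, hb3, hb4⟩ := ih pb qb hpb0 hqb0 htotb hhallb hcardb
    apply key (fun w' w => fa w' w + fb w' w)
    · intro w' w; have := ha1 w' w; have := hb1 w' w; linarith
    · intro w' w hEw; rw [ha2 w' w hEw, hb2 w' w hEw]; ring
    · intro w
      rw [Finset.sum_add_distrib, ha3 w, hb3 w]
      simp only [hpb]; ring
    · intro w'
      rw [Finset.sum_add_distrib, ha4 w', hb4 w']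
      simp only [hqb]; ring

end GaleAux

/-- Local simulability / stochastic bridge: each step of a local family
of stochastic linear maps can be realised by a local stochastic matrix depending on the
initial distribution and the time. -/
theorem local_simulability_stochastic_bridge
    {V : Type} [Fintype V] (E : V → V → Prop) (hloop : ∀ v, E v v)
    (Ψ : ℕ → (V → ℝ) →ₗ[ℝ] (V → ℝ))
    (hΨ0 : Ψ 0 = LinearMap.id)
    (hΨstoch : ∀ (t : ℕ) (p : V → ℝ), IsProbDist p → IsProbDist (Ψ t p))
    (hlocal : IsLocalFamily E Ψ) :
    ∀ p₀ : V → ℝ, IsProbDist p₀ → ∀ t : ℕ, 1 ≤ t →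
      ∃ P : V → V → ℝ, IsStochastic P ∧ IsLocalMatrix E P ∧
        Ψ t p₀ = matVec P (Ψ (t-1) p₀) := by
  classical
  intro p₀ hp₀ t ht
  obtain ⟨hp, hps⟩ := hΨstoch (t-1) p₀ hp₀
  obtain ⟨hq, hqs⟩ := hΨstoch t p₀ hp₀
  have hmass2 : ∀ (r : V → ℝ) (S : Set V) (Y : Finset V), (∀ w, w ∈ S ↔ w ∈ Y) →
      mass r S = ∑ w ∈ Y, r w := by
    intro r S Y hiff
    unfold mass
    rw [← Finset.sum_subset (Finset.subset_univ Y)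
      (fun s _ hs => Set.indicator_of_notMem (fun hmem => hs ((hiff s).1 hmem)) r)]
    apply Finset.sum_congr rfl
    intro s hs
    exact Set.indicator_of_mem ((hiff s).2 hs) r
  have hhall : ∀ X : Finset V, ∑ w ∈ X, Ψ t p₀ w ≤ ∑ w ∈ NN E X, Ψ (t-1) p₀ w := by
    intro X
    have hl := hlocal (↑X) p₀ hp₀ (t-1)
    rw [show t - 1 + 1 = t from by omega] at hl
    have iff1 : ∀ w, w ∈ (↑X : Set V) ↔ w ∈ X := fun w => Finset.mem_coe
    have iff2 : ∀ w, w ∈ nbhd E (↑X : Set V) ↔ w ∈ NN E X \ X := by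
      intro w
      simp only [nbhd, Set.mem_setOf_eq, Finset.mem_sdiff, mem_NN, Finset.mem_coe]
      constructor
      · rintro ⟨hw, u, hu, hE⟩
        exact ⟨⟨u, hu, hE⟩, hw⟩
      · rintro ⟨⟨u, hu, hE⟩, hw⟩
        exact ⟨hw, u, hu, hE⟩
    have hXN : X ⊆ NN E X := fun w hw => mem_NN.2 ⟨w, hw, hloop w⟩
    have e3 : ∑ w ∈ NN E X \ X, Ψ (t-1) p₀ w + ∑ w ∈ X, Ψ (t-1) p₀ w
        = ∑ w ∈ NN E X, Ψ (t-1) p₀ w := Finset.sum_sdiff hXN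
    rw [hmass2 _ _ X iff1, hmass2 _ _ X iff1, hmass2 _ _ (NN E X \ X) iff2] at hl
    linarith
  have htot : ∑ w, Ψ (t-1) p₀ w = ∑ w, Ψ t p₀ w := by rw [hps, hqs]
  obtain ⟨f, hf0, hfloc, hfsrc, hftgt⟩ :=
    gale E ((univ.filter fun w => Ψ (t-1) p₀ w ≠ 0).card + (univ.filter fun w => Ψ t p₀ w ≠ 0).card)
      (Ψ (t-1) p₀) (Ψ t p₀) hp hq htot hhall le_rfl
  refine ⟨fun w' w => if Ψ (t-1) p₀ w = 0 then (if w' = w then 1 else 0)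
      else f w' w / Ψ (t-1) p₀ w, ⟨?_, ?_⟩, ?_, ?_⟩
  · intro w' w
    dsimp only
    split_ifs with h1 h2
    · norm_num
    · norm_num
    · exact div_nonneg (hf0 w' w) (hp w)
  · intro w
    dsimp only
    by_cases h : Ψ (t-1) p₀ w = 0
    · simp [h]
    · simp only [if_neg h]
      rw [← Finset.sum_div, hfsrc w, div_self h]
  · intro w' w hEw
    dsimp only
    by_cases h : Ψ (t-1) p₀ w = 0
    · rw [if_pos h, if_neg]
      intro hww
      exact hEw (by rw [hww]; exact hloop w)
    · rw [if_neg h, hfloc w' w hEw, zero_div]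
  · funext w'
    show Ψ t p₀ w' = ∑ w, _ * Ψ (t-1) p₀ w
    have hterm : ∀ w, (if Ψ (t-1) p₀ w = 0 then (if w' = w then 1 else 0)
        else f w' w / Ψ (t-1) p₀ w) * Ψ (t-1) p₀ w = f w' w := by
      intro w
      by_cases h : Ψ (t-1) p₀ w = 0
      · rw [if_pos h, h, mul_zero]
        have h0 : ∑ u, f u w = 0 := by rw [hfsrc w, h]
        exact ((Finset.sum_eq_zero_iff_of_nonneg (fun u _ => hf0 u w)).1 h0 w' (mem_univ w')).symm
      · rw [if_neg h]
        exact div_mul_cancel₀ _ h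
    rw [Finset.sum_congr rfl (fun w _ => hterm w), hftgt w']
end

section
/- (Locality of quantum channels, equivalence.) Let C and V be finite sets, (V,E) a graph, and (M_k) a finite family of complex matrices indexed by C×V with ∑_k M_k† M_k = I, defining the quantum channel Γ(ρ) = ∑_k M_k ρ M_k†. Then the following are equivalent: (a) for all c,c' ∈ C and v,v' ∈ V with (v,v') ∉ E, one has (M_k)((c',v'),(c,v)) = 0 for every k; (b) for every X ⊆ V and every density operator ρ on C×V, P_X(Γ(ρ)) ≤ P_X(ρ) + P_{B(X)}(ρ). -/
/-!
Write `P_X(ρ) = Re tr(Π_X ρ)` with `Π_X` the coordinate projection onto `C × X`. If the Kraus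
operators are local then `Π_X M_k = Π_X M_k Π_Y` for `Y = X ∪ B(X)`, so on `X` the output `Γ(ρ)`
agrees with `Γ(Π_Y ρ Π_Y)`. The population of the latter on `X` is at most its trace, which by trace
preservation is `tr(Π_Y ρ) = P_X(ρ) + P_{B(X)}(ρ)`. Conversely, for `(v, v') ∉ E` the basis state at
`(c, v)` has no population on `{v'} ∪ B({v'})`, while the population of its image on `{v'}` is
`∑_k ∑_{c'} |M_k((c', v'), (c, v))|²`.
-/

open Finset Matrix
open scoped ComplexOrder

open scoped Classical in
/-- Population `P_X(ρ)`: real part of the sum of diagonal entries of `ρ` over lifted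
nodes whose vertex component lies in `X`. -/
noncomputable def popul {C V : Type*} [Fintype C] [Fintype V]
    (ρ : Matrix (C × V) (C × V) ℂ) (X : Set V) : ℝ :=
  (∑ x : C × V, if x.2 ∈ X then ρ x x else 0).re

namespace Matrix

variable {n K : Type*}

lemma PosSemidef.re_apply_self_nonneg {A : Matrix n n ℂ} (hA : A.PosSemidef) (i : n) :
    0 ≤ (A i i).re :=
  (Complex.nonneg_iff.mp hA.diag_nonneg).1

section Kraus

variable [Fintype n] [Fintype K]

noncomputable def krausMap (M : K → Matrix n n ℂ) (ρ : Matrix n n ℂ) : Matrix n n ℂ :=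
  ∑ k, M k * ρ * (M k)ᴴ

lemma PosSemidef.krausMap {ρ : Matrix n n ℂ} (hρ : ρ.PosSemidef) (M : K → Matrix n n ℂ) :
    (krausMap M ρ).PosSemidef :=
  posSemidef_sum _ fun k _ => hρ.mul_mul_conjTranspose_same (M k)

end Kraus

variable [DecidableEq n]

noncomputable def projOn (s : Set n) : Matrix n n ℂ := diagonal (s.indicator 1)

@[simp]
lemma conjTranspose_projOn (s : Set n) : (projOn s)ᴴ = projOn s := by
  rw [projOn, diagonal_conjTranspose]
  congr 1
  ext i
  by_cases hi : i ∈ s <;> simp [hi]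

lemma posSemidef_single_self {a : ℂ} (ha : 0 ≤ a) (j : n) : (single j j a).PosSemidef := by
  rw [← diagonal_single]
  exact posSemidef_diagonal_iff.mpr fun i => by
    by_cases h : i = j <;> simp [h, ha]

variable [Fintype n]

lemma projOn_mul_self (s : Set n) : projOn s * projOn s = projOn s := by
  rw [projOn, diagonal_mul_diagonal]
  congr 1
  ext i
  by_cases hi : i ∈ s <;> simp [hi]

lemma projOn_mul_mul_projOn_of_apply_eq_zero {s t : Set n} {A : Matrix n n ℂ}
    (hA : ∀ i j, i ∈ s → j ∉ t → A i j = 0) : projOn s * A * projOn t = projOn s * A := by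
  ext i j
  by_cases hi : i ∈ s
  · by_cases hj : j ∈ t
    · simp [projOn, hi, hj]
    · simp [projOn, hA i j hi hj]
  · simp [projOn, hi]

lemma trace_projOn_mul (s : Set n) (A : Matrix n n ℂ) :
    (projOn s * A).trace = ∑ i, s.indicator (fun i => A i i) i := by
  refine Finset.sum_congr rfl fun i _ => ?_
  by_cases hi : i ∈ s <;> simp [projOn, hi]

lemma trace_projOn_mul_conj (s : Set n) (A ρ : Matrix n n ℂ) :
    (projOn s * (A * ρ * Aᴴ)).trace = (projOn s * A * ρ * (projOn s * A)ᴴ).trace := by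
  rw [conjTranspose_mul, conjTranspose_projOn, ← Matrix.mul_assoc _ Aᴴ,
    trace_mul_comm _ (projOn s)]
  simp only [← Matrix.mul_assoc]
  rw [projOn_mul_self]

lemma re_trace_projOn_mul_le {A : Matrix n n ℂ} (hA : A.PosSemidef) (s : Set n) :
    (projOn s * A).trace.re ≤ A.trace.re := by
  rw [trace_projOn_mul, trace, Complex.re_sum, Complex.re_sum]
  refine Finset.sum_le_sum fun i _ => ?_
  by_cases hi : i ∈ s
  · simp [hi]
  · simpa [hi] using hA.re_apply_self_nonneg i

lemma re_apply_self_le_re_trace_projOn_mul {A : Matrix n n ℂ} (hA : A.PosSemidef) {s : Set n}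
    {i : n} (hi : i ∈ s) : (A i i).re ≤ (projOn s * A).trace.re := by
  rw [trace_projOn_mul, Complex.re_sum, ← Set.indicator_of_mem hi fun i => A i i]
  refine Finset.single_le_sum (f := fun i => (s.indicator (fun i => A i i) i).re)
    (fun l _ => ?_) (Finset.mem_univ i)
  by_cases hl : l ∈ s
  · simpa [hl] using hA.re_apply_self_nonneg l
  · simp [hl]

variable [Fintype K]

lemma trace_krausMap {M : K → Matrix n n ℂ} (hM : ∑ k, (M k)ᴴ * M k = 1) (ρ : Matrix n n ℂ) :
    (krausMap M ρ).trace = ρ.trace := by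
  calc (krausMap M ρ).trace = ∑ k, ((M k)ᴴ * M k * ρ).trace := by
        rw [krausMap, trace_sum]
        exact Finset.sum_congr rfl fun k _ => by rw [trace_mul_cycle, Matrix.mul_assoc]
    _ = ρ.trace := by rw [← trace_sum, ← Finset.sum_mul, hM, Matrix.one_mul]

theorem re_trace_projOn_mul_krausMap_le {M : K → Matrix n n ℂ} (hM : ∑ k, (M k)ᴴ * M k = 1)
    {s t : Set n} (hloc : ∀ k i j, i ∈ s → j ∉ t → M k i j = 0) {ρ : Matrix n n ℂ}
    (hρ : ρ.PosSemidef) : (projOn s * krausMap M ρ).trace.re ≤ (projOn t * ρ).trace.re := by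
  set ρt := projOn t * ρ * projOn t
  have hcompress : (projOn s * krausMap M ρ).trace = (projOn s * krausMap M ρt).trace := by
    simp only [krausMap, Matrix.mul_sum, trace_sum]
    refine Finset.sum_congr rfl fun k _ => ?_
    rw [trace_projOn_mul_conj, trace_projOn_mul_conj]
    conv_lhs => rw [← projOn_mul_mul_projOn_of_apply_eq_zero (hloc k)]
    simp only [ρt, conjTranspose_mul, conjTranspose_projOn, Matrix.mul_assoc]
  have hρt : ρt.PosSemidef := by
    simpa using hρ.conjTranspose_mul_mul_same (projOn t)
  calc (projOn s * krausMap M ρ).trace.re = (projOn s * krausMap M ρt).trace.re := by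
        rw [hcompress]
    _ ≤ (krausMap M ρt).trace.re := re_trace_projOn_mul_le (hρt.krausMap M) s
    _ = (projOn t * ρ).trace.re := by
        rw [trace_krausMap hM, trace_mul_comm, ← Matrix.mul_assoc, projOn_mul_self]

lemma re_krausMap_single_apply_self (M : K → Matrix n n ℂ) (i j : n) :
    (krausMap M (single j j 1) i i).re = ∑ k, Complex.normSq (M k i j) := by
  rw [krausMap, sum_apply, Complex.re_sum]
  refine Finset.sum_congr rfl fun k _ => ?_
  rw [mul_apply, Finset.sum_eq_single j (fun l _ hl => by simp [hl]) (by simp),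
    mul_single_apply_same, mul_one, conjTranspose_apply, Complex.star_def, Complex.mul_conj,
    Complex.ofReal_re]

end Matrix

section Population

variable {C V : Type*} [Fintype C] [Fintype V]

lemma popul_union_of_disjoint (ρ : Matrix (C × V) (C × V) ℂ) {X Y : Set V} (h : Disjoint X Y) :
    popul ρ (X ∪ Y) = popul ρ X + popul ρ Y := by
  rw [popul, popul, popul, ← Complex.add_re, ← Finset.sum_add_distrib]
  congr 1
  refine Finset.sum_congr rfl fun x _ => ?_
  by_cases hX : x.2 ∈ X
  · simp [hX, Set.disjoint_left.mp h hX]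
  · by_cases hY : x.2 ∈ Y <;> simp [hX, hY]

variable [DecidableEq C] [DecidableEq V]

lemma popul_eq_re_trace_projOn (ρ : Matrix (C × V) (C × V) ℂ) (X : Set V) :
    popul ρ X = (projOn (Prod.snd ⁻¹' X) * ρ).trace.re := by
  rw [popul, trace_projOn_mul]
  congr 1

lemma popul_single_of_notMem {c : C} {v : V} {X : Set V} (hv : v ∉ X) :
    popul (single (c, v) (c, v) 1) X = 0 := by
  rw [popul]
  refine Complex.ext_iff.mp (Finset.sum_eq_zero fun x _ => ?_) |>.1
  by_cases hx : x = (c, v)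
  · simp [hx, hv]
  · simp [single, Ne.symm hx]

end Population

lemma disjoint_nbhd {V : Type*} [Fintype V] (E : V → V → Prop) (X : Set V) :
    Disjoint X (nbhd E X) :=
  Set.disjoint_left.mpr fun _ hv hB => hB.1 hv

lemma mem_union_nbhd_of_mem {V : Type*} [Fintype V] {E : V → V → Prop} {X : Set V} {v v' : V}
    (hv' : v' ∈ X) (hE : E v v') : v ∈ X ∪ nbhd E X := by
  by_cases hv : v ∈ X
  · exact Or.inl hv
  · exact Or.inr ⟨hv, v', hv', hE⟩

/-- Locality of quantum channels: the Kraus operators of a quantum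
channel vanish on non-edges iff the channel cannot move more population onto a vertex
set `X` than was present on `X` and its neighborhood. -/
theorem quantum_channel_locality_equivalence
    {C V K : Type} [Fintype C] [Fintype V] [Fintype K] [DecidableEq C] [DecidableEq V]
    (E : V → V → Prop) (hloop : ∀ v, E v v)
    (M : K → Matrix (C × V) (C × V) ℂ)
    (hKraus : ∑ k, (M k)ᴴ * M k = 1) :
    (∀ (c c' : C) (v v' : V), ¬ E v v' → ∀ k, M k (c', v') (c, v) = 0) ↔
    (∀ (X : Set V) (ρ : Matrix (C × V) (C × V) ℂ), ρ.PosSemidef → ρ.trace = 1 →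
      popul (∑ k, M k * ρ * (M k)ᴴ) X ≤ popul ρ X + popul ρ (nbhd E X)) := by
  constructor
  · intro hloc X ρ hρ _
    rw [← popul_union_of_disjoint _ (disjoint_nbhd E X), popul_eq_re_trace_projOn,
      popul_eq_re_trace_projOn]
    refine re_trace_projOn_mul_krausMap_le hKraus (fun k i j hi hj => ?_) hρ
    exact hloc j.1 i.1 j.2 i.2 (fun hE => hj (mem_union_nbhd_of_mem hi hE)) k
  · intro hpop c c' v v' hnE k
    have hv : v ∉ ({v'} : Set V) ∪ nbhd E {v'} := by
      rintro (rfl | ⟨-, w, rfl, hE⟩)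
      exacts [hnE (hloop v), hnE hE]
    have hρ := posSemidef_single_self zero_le_one (c, v)
    have h := hpop {v'} _ hρ (trace_single_eq_same _ _)
    rw [← popul_union_of_disjoint _ (disjoint_nbhd E _), popul_single_of_notMem hv,
      popul_eq_re_trace_projOn] at h
    have hdiag := (re_apply_self_le_re_trace_projOn_mul (hρ.krausMap M)
      (show (c', v') ∈ Prod.snd ⁻¹' {v'} from rfl)).trans h
    rw [re_krausMap_single_apply_self] at hdiag
    have hsum := le_antisymm hdiag (Finset.sum_nonneg fun _ _ => Complex.normSq_nonneg _)
    exact Complex.normSq_eq_zero.mp <| (Finset.sum_eq_zero_iff_of_nonneg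
      fun _ _ => Complex.normSq_nonneg _).mp hsum k (Finset.mem_univ k)
end

section
/- Let P be a stochastic matrix on a finite set V with invariant distribution p̄ (P p̄ = p̄), and let X ⊆ V with p̄(X) > 0. Define p̄_X(v) = p̄(v)/p̄(X) for v ∈ X and p̄_X(v) = 0 otherwise. Then for every t ≥ 0, the probability that P^t p̄_X assigns to the complement of X satisfies (P^t p̄_X)(Xᶜ) ≤ t · Φ_X(P). -/
open Finset

/-- for a stochastic matrix `P` with invariant distribution `p̄` and a
set `X` of positive mass, the mass that `P^t p̄_X` places outside `X` is at most
`t·Φ_X(P)`. -/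
theorem escape_probability_le_bottleneck
    {V : Type} [Fintype V]
    (P : V → V → ℝ) (hP : IsStochastic P)
    (pbar : V → ℝ) (hpbar : IsProbDist pbar) (hinv : matVec P pbar = pbar)
    (X : Set V) (hX : 0 < mass pbar X) (t : ℕ) :
    mass ((matVec P)^[t] (condDist pbar X)) Xᶜ ≤ (t : ℝ) * bottleneck P pbar X := by
  classical
  obtain ⟨hPpos, hPcol⟩ := hP
  obtain ⟨hpos, _⟩ := hpbar
  set M := mass pbar X with hM
  set q : ℕ → V → ℝ := fun t => (matVec P)^[t] (condDist pbar X) with hq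
  have hqsucc : ∀ t, q (t+1) = matVec P (q t) := by
    intro t; simp [hq, Function.iterate_succ_apply']
  have hbound : ∀ t s, 0 ≤ q t s ∧ q t s ≤ pbar s / M := by
    intro t
    induction t with
    | zero =>
      intro s
      simp only [hq, Function.iterate_zero, id_eq, condDist, Set.indicator_apply]
      split
      · exact ⟨div_nonneg (hpos s) hX.le, le_refl _⟩
      · exact ⟨le_refl _, div_nonneg (hpos s) hX.le⟩
    | succ t ih =>
      intro s'
      rw [hqsucc]
      constructor
      · exact Finset.sum_nonneg fun s _ => mul_nonneg (hPpos s' s) (ih s).1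
      · have h1 : matVec P (q t) s' ≤ ∑ s, P s' s * (pbar s / M) :=
          Finset.sum_le_sum fun s _ =>
            mul_le_mul_of_nonneg_left (ih s).2 (hPpos s' s)
        have h2 : ∑ s, P s' s * (pbar s / M) = pbar s' / M := by
          have e : ∑ s, P s' s * (pbar s / M) = (∑ s, P s' s * pbar s) / M := by
            rw [Finset.sum_div]
            exact Finset.sum_congr rfl fun s _ => (mul_div_assoc _ _ _).symm
          rw [e]
          have e2 := congrFun hinv s'
          simp only [matVec] at e2
          rw [e2]
        linarith
  have hstep : ∀ t, mass (q (t+1)) Xᶜ ≤ mass (q t) Xᶜ + bottleneck P pbar X := by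
    intro t
    rw [hqsucc]
    have hrw : mass (matVec P (q t)) Xᶜ
        = ∑ s, (∑ s', if s' ∉ X then P s' s else 0) * q t s := by
      unfold mass matVec
      have e : ∀ s', Xᶜ.indicator (fun s'' => ∑ s, P s'' s * q t s) s'
          = ∑ s, (if s' ∉ X then P s' s else 0) * q t s := by
        intro s'
        rw [Set.indicator_apply]
        by_cases h : s' ∈ Xᶜ
        · rw [if_pos h]
          exact Finset.sum_congr rfl fun s _ => by
            rw [if_pos ((Set.mem_compl_iff _ _).mp h)]
        · rw [if_neg h]
          have hX' : ¬ s' ∉ X := fun hn => h hn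
          symm
          exact Finset.sum_eq_zero fun s _ => by rw [if_neg hX', zero_mul]
      calc ∑ s', Xᶜ.indicator (fun s'' => ∑ s, P s'' s * q t s) s'
          = ∑ s', ∑ s, (if s' ∉ X then P s' s else 0) * q t s :=
            Finset.sum_congr rfl fun s' _ => e s'
        _ = ∑ s, ∑ s', (if s' ∉ X then P s' s else 0) * q t s := Finset.sum_comm
        _ = ∑ s, (∑ s', if s' ∉ X then P s' s else 0) * q t s :=
            Finset.sum_congr rfl fun s _ => (Finset.sum_mul _ _ _).symm
    rw [hrw]
    have hsplit : ∀ s, (∑ s', if s' ∉ X then P s' s else 0) * q t s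
        ≤ (if s ∈ X then (∑ s', if s' ∉ X then P s' s * pbar s else 0) / M
           else q t s) := by
      intro s
      by_cases hs : s ∈ X
      · rw [if_pos hs]
        have hqle := (hbound t s).2
        have hc : 0 ≤ ∑ s', if s' ∉ X then P s' s else 0 :=
          Finset.sum_nonneg fun s' _ => by
            split
            · exact hPpos s' s
            · exact le_rfl
        calc (∑ s', if s' ∉ X then P s' s else 0) * q t s
            ≤ (∑ s', if s' ∉ X then P s' s else 0) * (pbar s / M) :=
              mul_le_mul_of_nonneg_left hqle hc
          _ = (∑ s', if s' ∉ X then P s' s * pbar s else 0) / M := by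
              rw [Finset.sum_mul, Finset.sum_div]
              refine Finset.sum_congr rfl fun s' _ => ?_
              split
              · exact (mul_div_assoc _ _ _).symm
              · rw [zero_mul, zero_div]
      · rw [if_neg hs]
        have hle1 : (∑ s', if s' ∉ X then P s' s else 0) ≤ 1 := by
          rw [← hPcol s]
          refine Finset.sum_le_sum fun s' _ => ?_
          split
          · exact le_rfl
          · exact hPpos s' s
        have hc : 0 ≤ ∑ s', if s' ∉ X then P s' s else 0 :=
          Finset.sum_nonneg fun s' _ => by
            split
            · exact hPpos s' s
            · exact le_rfl
        nlinarith [(hbound t s).1]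
    have hsum2 : ∑ s, (if s ∈ X then (∑ s', if s' ∉ X then P s' s * pbar s else 0) / M
           else q t s) = bottleneck P pbar X + mass (q t) Xᶜ := by
      have e1 : (∑ s, if s ∈ X then (∑ s', if s' ∉ X then P s' s * pbar s else 0) / M
           else q t s)
          = (∑ s, if s ∈ X then (∑ s', if s' ∉ X then P s' s * pbar s else 0) / M else 0)
            + ∑ s, (if s ∈ X then 0 else q t s) := by
        rw [← Finset.sum_add_distrib]
        refine Finset.sum_congr rfl fun s _ => ?_
        by_cases hs : s ∈ X
        · rw [if_pos hs, if_pos hs, if_pos hs, add_zero]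
        · rw [if_neg hs, if_neg hs, if_neg hs, zero_add]
      rw [e1]
      congr 1
      · unfold bottleneck ergFlow
        rw [← hM, Finset.sum_div]
        refine Finset.sum_congr rfl fun s _ => ?_
        by_cases hs : s ∈ X
        · rw [if_pos hs]
          congr 1
          refine Finset.sum_congr rfl fun s' _ => ?_
          by_cases hs' : s' ∉ X
          · rw [if_pos hs', if_pos ⟨hs, hs'⟩]
          · rw [if_neg hs', if_neg (fun h => hs' h.2)]
        · rw [if_neg hs]
          symm
          rw [Finset.sum_div]
          exact Finset.sum_eq_zero fun s' _ => by
            rw [if_neg (fun h => hs h.1), zero_div]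
      · unfold mass
        refine Finset.sum_congr rfl fun s _ => ?_
        rw [Set.indicator_apply]
        by_cases hs : s ∈ X
        · rw [if_pos hs, if_neg (fun h : s ∈ Xᶜ => h hs)]
        · rw [if_neg hs, if_pos ((Set.mem_compl_iff _ _).mpr hs)]
    calc ∑ s, (∑ s', if s' ∉ X then P s' s else 0) * q t s
        ≤ ∑ s, (if s ∈ X then (∑ s', if s' ∉ X then P s' s * pbar s else 0) / M
           else q t s) := Finset.sum_le_sum fun s _ => hsplit s
      _ = bottleneck P pbar X + mass (q t) Xᶜ := hsum2
      _ = mass (q t) Xᶜ + bottleneck P pbar X := add_comm _ _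
  show mass (q t) Xᶜ ≤ (t : ℝ) * bottleneck P pbar X
  induction t with
  | zero =>
    simp only [Nat.cast_zero, zero_mul]
    have e0 : mass (q 0) Xᶜ = 0 := by
      unfold mass
      refine Finset.sum_eq_zero fun s _ => ?_
      rw [Set.indicator_apply]
      by_cases hs : s ∈ Xᶜ
      · rw [if_pos hs]
        show condDist pbar X s = 0
        exact Set.indicator_of_notMem ((Set.mem_compl_iff _ _).mp hs) _
      · rw [if_neg hs]
    exact le_of_eq e0
  | succ t ih =>
    have := hstep t
    push_cast
    linarith
end

section
/- Let P be a stochastic matrix on a finite set V with invariant distribution p̄ (P p̄ = p̄), and let X ⊆ V with p̄(X) > 0. Define p̄_X(v) = p̄(v)/p̄(X) for v ∈ X and p̄_X(v) = 0 otherwise. Then (P p̄_X)(Xᶜ) = ‖P p̄_X − p̄_X‖_TV. -/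
open Finset

/- Since `p̄` is invariant and `P` has nonnegative entries, `P p̄_X ≤ P (p̄ / p̄(X)) = p̄ / p̄(X) = p̄_X`
on `X`; so `P p̄_X` can only gain mass outside `X`, where `p̄_X` vanishes. As `P` preserves total mass,
the mass lost on `X` equals the mass gained on `Xᶜ`, and each half of the total variation sum is
`(P p̄_X)(Xᶜ)`. -/

section MatVec

variable {S : Type*} [Fintype S]

theorem sum_matVec {P : S → S → ℝ} (hcol : ∀ s, ∑ s', P s' s = 1) (p : S → ℝ) :
    ∑ s, matVec P p s = ∑ s, p s := by
  unfold matVec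
  rw [Finset.sum_comm]
  simp_rw [← Finset.sum_mul, hcol, one_mul]

theorem matVec_mono {P : S → S → ℝ} (hP : ∀ s' s, 0 ≤ P s' s) {p q : S → ℝ} (hpq : p ≤ q) :
    matVec P p ≤ matVec P q := fun s' =>
  Finset.sum_le_sum fun s _ => mul_le_mul_of_nonneg_left (hpq s) (hP s' s)

theorem matVec_nonneg {P : S → S → ℝ} (hP : ∀ s' s, 0 ≤ P s' s) {p : S → ℝ} (hp : 0 ≤ p) :
    0 ≤ matVec P p := fun s' =>
  Finset.sum_nonneg fun s _ => mul_nonneg (hP s' s) (hp s)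

theorem matVec_div_const (P : S → S → ℝ) (p : S → ℝ) (c : ℝ) :
    matVec P (fun s => p s / c) = fun s' => matVec P p s' / c := by
  ext s'
  simp only [matVec, Finset.sum_div, mul_div_assoc]

end MatVec

section CondDist

variable {S : Type*} [Fintype S] {pbar : S → ℝ} {X : Set S}

theorem condDist_le (hpbar : ∀ s, 0 ≤ pbar s) (hX : 0 < mass pbar X) :
    condDist pbar X ≤ fun s => pbar s / mass pbar X :=
  Set.indicator_le_self' fun s _ => div_nonneg (hpbar s) hX.le

theorem condDist_nonneg (hpbar : ∀ s, 0 ≤ pbar s) (hX : 0 < mass pbar X) :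
    0 ≤ condDist pbar X :=
  Set.indicator_nonneg fun s _ => div_nonneg (hpbar s) hX.le

theorem condDist_of_notMem {s : S} (hs : s ∉ X) : condDist pbar X s = 0 :=
  Set.indicator_of_notMem hs _

theorem matVec_condDist_le_of_mem {P : S → S → ℝ} (hP : ∀ s' s, 0 ≤ P s' s)
    (hinv : matVec P pbar = pbar) (hpbar : ∀ s, 0 ≤ pbar s) (hX : 0 < mass pbar X)
    {v : S} (hv : v ∈ X) :
    matVec P (condDist pbar X) v ≤ condDist pbar X v := by
  calc matVec P (condDist pbar X) v
      ≤ matVec P (fun s => pbar s / mass pbar X) v := matVec_mono hP (condDist_le hpbar hX) v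
    _ = pbar v / mass pbar X := by rw [matVec_div_const, hinv]
    _ = condDist pbar X v := (Set.indicator_of_mem hv (fun s => pbar s / mass pbar X)).symm

end CondDist

theorem tvDist_eq_mass_compl {S : Type*} [Fintype S] {r q : S → ℝ} {X : Set S}
    (hsum : ∑ s, r s = ∑ s, q s) (hr : 0 ≤ r) (hq : ∀ s ∉ X, q s = 0)
    (hle : ∀ s ∈ X, r s ≤ q s) :
    tvDist r q = mass r Xᶜ := by
  have habs : ∀ s, |r s - q s| = (q s - r s) + 2 * Xᶜ.indicator r s := by
    intro s
    by_cases hs : s ∈ X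
    · rw [Set.indicator_of_notMem (Set.notMem_compl_iff.mpr hs), abs_sub_comm,
        abs_of_nonneg (sub_nonneg.mpr (hle s hs))]
      ring
    · rw [Set.indicator_of_mem (Set.mem_compl hs), hq s hs, sub_zero, abs_of_nonneg (hr s)]
      ring
  simp only [tvDist, mass, habs, Finset.sum_add_distrib, Finset.sum_sub_distrib, hsum,
    ← Finset.mul_sum]
  ring

/-- for a stochastic matrix `P` with invariant distribution `p̄` and a
set `X` of positive mass, the mass of `P p̄_X` outside `X` equals the total variation
distance `‖P p̄_X − p̄_X‖_TV`. -/
theorem escape_probability_eq_tvDist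
    {V : Type} [Fintype V]
    (P : V → V → ℝ) (hP : IsStochastic P)
    (pbar : V → ℝ) (hpbar : IsProbDist pbar) (hinv : matVec P pbar = pbar)
    (X : Set V) (hX : 0 < mass pbar X) :
    mass (matVec P (condDist pbar X)) Xᶜ
      = tvDist (matVec P (condDist pbar X)) (condDist pbar X) := by
  obtain ⟨hPnn, hPcol⟩ := hP
  exact (tvDist_eq_mass_compl (sum_matVec hPcol _)
    (matVec_nonneg hPnn (condDist_nonneg hpbar.1 hX)) (fun _ => condDist_of_notMem)
    (fun _ => matVec_condDist_le_of_mem hPnn hinv hpbar.1 hX)).symm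
end

section
/- (Conductance of the induced chain.) Let C, V be finite sets and P a stochastic matrix on C×V with invariant distribution p̂ (P p̂ = p̂) whose marginal p̄(v) = ∑_{c∈C} p̂(c,v) is strictly positive for every v ∈ V. Let P_V be the induced chain on V. Then: (i) P_V is a stochastic matrix on V with P_V p̄ = p̄; and (ii) for every X ⊆ V with p̄(X) > 0, the bottleneck ratios satisfy Φ_X(P_V) = Φ_{C×X}(P), where Φ_X(P_V) is computed with respect to p̄ and Φ_{C×X}(P) with respect to p̂. -/
open Finset

/-- Conductance of the induced chain: the induced chain `P_V` of a
lifted Markov chain `P` with invariant `p̂` (with everywhere-positive marginal `p̄`) is a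
stochastic matrix fixing `p̄`, and its bottleneck ratio over `X` equals that of `P` over
`C × X`. -/
theorem induced_chain_stochastic_and_bottleneck
    {C V : Type} [Fintype C] [Fintype V]
    (P : C × V → C × V → ℝ) (hP : IsStochastic P)
    (phat : C × V → ℝ) (hphat : IsProbDist phat) (hinv : matVec P phat = phat)
    (hpos : ∀ v : V, 0 < margDist phat v) :
    IsStochastic (inducedChain P phat) ∧
    matVec (inducedChain P phat) (margDist phat) = margDist phat ∧
    ∀ X : Set V, 0 < mass (margDist phat) X →
      bottleneck (inducedChain P phat) (margDist phat) X
        = bottleneck P phat {x : C × V | x.2 ∈ X} := by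
  classical
  have hne : ∀ v : V, margDist phat v ≠ 0 := fun v => (hpos v).ne'
  have key : ∀ v' v, inducedChain P phat v' v * margDist phat v
      = ∑ c, ∑ c', P (c', v') (c, v) * phat (c, v) := by
    intro v' v
    rw [inducedChain, Finset.sum_mul]
    refine Finset.sum_congr rfl fun c _ => ?_
    rw [Finset.sum_mul]
    refine Finset.sum_congr rfl fun c' _ => ?_
    rw [div_mul_eq_mul_div, div_mul_eq_mul_div, div_eq_iff (hne v)]
    ring
  have hstoch : IsStochastic (inducedChain P phat) := by
    constructor
    · intro v' v
      refine Finset.sum_nonneg fun c _ => Finset.sum_nonneg fun c' _ => ?_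
      exact mul_nonneg (div_nonneg (hphat.1 _) (hpos v).le) (hP.1 _ _)
    · intro v
      unfold inducedChain
      rw [Finset.sum_comm]
      have h3 : ∀ c : C, ∑ v', ∑ c', phat (c, v) / margDist phat v * P (c', v') (c, v)
          = phat (c, v) / margDist phat v := by
        intro c
        have h1 : ∑ v' : V, ∑ c' : C, P (c', v') (c, v) = 1 := by
          have h0 := hP.2 (c, v)
          rw [Fintype.sum_prod_type] at h0
          rw [Finset.sum_comm]; exact h0
        simp only [← Finset.mul_sum]
        rw [h1, mul_one]
      simp only [h3]
      rw [← Finset.sum_div, div_eq_one_iff_eq (hne v)]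
      rfl
  have hfix : matVec (inducedChain P phat) (margDist phat) = margDist phat := by
    funext v'
    show ∑ v, inducedChain P phat v' v * margDist phat v = margDist phat v'
    simp only [key]
    have h2 : margDist phat v' = ∑ c' : C, ∑ c : C, ∑ v : V, P (c', v') (c, v) * phat (c, v) := by
      show ∑ c' : C, phat (c', v') = _
      refine Finset.sum_congr rfl fun c' _ => ?_
      conv_lhs => rw [← hinv]
      show ∑ x : C × V, P (c', v') x * phat x = _
      rw [Fintype.sum_prod_type]
    rw [h2]
    have hA : ∑ v : V, ∑ c : C, ∑ c' : C, P (c', v') (c, v) * phat (c, v)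
        = ∑ v : V, ∑ c' : C, ∑ c : C, P (c', v') (c, v) * phat (c, v) :=
      Finset.sum_congr rfl fun v _ => Finset.sum_comm
    rw [hA, Finset.sum_comm]
    exact Finset.sum_congr rfl fun c' _ => Finset.sum_comm
  refine ⟨hstoch, hfix, fun X hX => ?_⟩
  have hmass : mass (margDist phat) X = mass phat {x : C × V | x.2 ∈ X} := by
    unfold mass
    rw [Fintype.sum_prod_type_right]
    refine Finset.sum_congr rfl fun v _ => ?_
    simp only [Set.indicator_apply, Set.mem_setOf_eq, margDist]
    split_ifs with h
    · rfl
    · simp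
  set T : V → V → C → C → ℝ := fun v v' c c' =>
    if v ∈ X ∧ v' ∉ X then P (c', v') (c, v) * phat (c, v) else 0 with hT
  have hflow : ergFlow (inducedChain P phat) (margDist phat) X
      = ergFlow P phat {x : C × V | x.2 ∈ X} := by
    have hL : ergFlow (inducedChain P phat) (margDist phat) X
        = ∑ v, ∑ v', ∑ c, ∑ c', T v v' c c' := by
      unfold ergFlow
      refine Finset.sum_congr rfl fun v _ => Finset.sum_congr rfl fun v' _ => ?_
      simp only [hT]
      split_ifs with h
      · rw [key]
      · simp
    have hR : ergFlow P phat {x : C × V | x.2 ∈ X}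
        = ∑ c, ∑ v, ∑ c', ∑ v', T v v' c c' := by
      unfold ergFlow
      rw [Fintype.sum_prod_type]
      refine Finset.sum_congr rfl fun c _ => Finset.sum_congr rfl fun v _ => ?_
      rw [Fintype.sum_prod_type]
      refine Finset.sum_congr rfl fun c' _ => Finset.sum_congr rfl fun v' _ => ?_
      simp only [hT, Set.mem_setOf_eq]
    rw [hL, hR]
    have hA : ∀ v : V, ∑ v', ∑ c, ∑ c', T v v' c c' = ∑ c, ∑ v', ∑ c', T v v' c c' :=
      fun v => Finset.sum_comm
    simp only [hA]
    rw [Finset.sum_comm]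
    exact Finset.sum_congr rfl fun c _ => Finset.sum_congr rfl fun v _ => Finset.sum_comm
  unfold bottleneck
  rw [hmass, hflow]
end
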